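/- arXiv:1106.1594 — 2 statements merged into one kernel-verified Lean document; each statement's English description precedes it below -/
import Mathlib

section
/- If S is a set-valued tableau containing at least one multicell, then di(S), obtained by removing the largest entry x from the rightmost multicell c in the highest row containing a multicell and RSK-inserting x into the subtableau of S consisting of all strictly higher rows, is again a valid set-valued tableau. -/
namespace KG

/-- A cell of a set-valued tableau: a strictly increasing nonempty list of positive integers. -/
abbrev Cell := List ℕ

/-! ### RSK row insertion -/

/-- Insert a letter into a row: return the new row and the bumped letter (if any). -/
def rowInsert (x : ℕ) : List ℕ → List ℕ × Option ℕ
  | [] => ([x], none)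
  | a :: r =>
    if x < a then (x :: r, some a)
    else
      let p := rowInsert x r
      (a :: p.1, p.2)

/-- Insert a letter into a tableau given as a list of rows (bottom row first). -/
def insert1 : List (List ℕ) → ℕ → List (List ℕ)
  | [], x => [[x]]
  | r :: rest, x =>
    match rowInsert x r with
    | (r', none) => r' :: rest
    | (r', some b) => r' :: insert1 rest b

/-- The RSK insertion tableau of a word; rows are listed bottom-to-top. -/
def RSK (w : List ℕ) : List (List ℕ) := w.foldl insert1 []

/-- Two words are Knuth equivalent iff they have the same RSK insertion tableau. -/
def KnuthEquiv (w w' : List ℕ) : Prop := RSK w = RSK w'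

/-! ### Tableaux, set-valued tableaux, reverse plane partitions.
Rows are listed from top to bottom (so row lengths weakly increase along the list);
the last row of the list is the bottom row of the diagram. -/

def cellOK (c : Cell) : Prop := c ≠ [] ∧ c.Pairwise (· < ·) ∧ ∀ x ∈ c, 0 < x

/-- every entry of `c` is at most every entry of `d` (max c ≤ min d). -/
def le2 (c d : Cell) : Prop := ∀ a ∈ c, ∀ b ∈ d, a ≤ b

/-- every entry of `c` is less than every entry of `d` (max c < min d). -/
def lt2 (c d : Cell) : Prop := ∀ a ∈ c, ∀ b ∈ d, a < b

/-- Validity predicate for the rows (top-to-bottom) of a set-valued tableau. -/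
def SVTRows (rows : List (List Cell)) : Prop :=
  (∀ r ∈ rows, r ≠ [] ∧ (∀ c ∈ r, cellOK c) ∧ r.Chain' le2) ∧
  rows.Chain' (fun up low =>
    up.length ≤ low.length ∧
    ∀ (j : ℕ) (cu cl : Cell), up[j]? = some cu → low[j]? = some cl → lt2 cl cu)

def SVT := {rows : List (List Cell) // SVTRows rows}

/-- Validity predicate for the rows (top-to-bottom) of a semistandard Young tableau. -/
def SSYTRows (rows : List (List ℕ)) : Prop :=
  (∀ r ∈ rows, r ≠ [] ∧ (∀ x ∈ r, 0 < x) ∧ r.Chain' (· ≤ ·)) ∧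
  rows.Chain' (fun up low =>
    up.length ≤ low.length ∧
    ∀ (j a b : ℕ), up[j]? = some b → low[j]? = some a → a < b)

def SSYT := {rows : List (List ℕ) // SSYTRows rows}

/-- Validity predicate for the rows (top-to-bottom) of a reverse plane partition. -/
def RPPRows (rows : List (List ℕ)) : Prop :=
  (∀ r ∈ rows, r ≠ [] ∧ (∀ x ∈ r, 0 < x) ∧ r.Chain' (· ≤ ·)) ∧
  rows.Chain' (fun up low =>
    up.length ≤ low.length ∧
    ∀ (j a b : ℕ), up[j]? = some b → low[j]? = some a → a ≤ b)

def RPP := {rows : List (List ℕ) // RPPRows rows}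

/-- The shape, as a weakly decreasing list (bottom row length first). -/
def shapeOf {α : Type*} (rows : List (List α)) : List ℕ := (rows.map List.length).reverse

/-- A partition: a weakly decreasing list of positive integers. -/
def IsPartition (l : List ℕ) : Prop := l.Chain' (· ≥ ·) ∧ ∀ x ∈ l, 0 < x

/-! ### Reading words -/

/-- Reading word of a row of a set-valued tableau: first the non-minimal entries of each
cell, cells right to left and within a cell largest to smallest; then the minimal entries
of the cells, left to right. -/
def svtRowWord (r : List Cell) : List ℕ :=
  (r.reverse.map (fun c => c.tail.reverse)).flatten ++ r.map List.headI

/-- Reading word of a set-valued tableau (rows top to bottom). -/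
def svtWordRows (rows : List (List Cell)) : List ℕ := (rows.map svtRowWord).flatten

/-- Reading word of a semistandard tableau: rows top to bottom, left to right. -/
def ssytWordRows (rows : List (List ℕ)) : List ℕ := rows.flatten

/-- The circled entries of an upper row: those not equal to the entry directly below. -/
def circMark (up low : List ℕ) : List ℕ :=
  ((up.zipIdx.map Prod.swap).filter (fun p => !(low[p.1]? == some p.2))).map Prod.snd

/-- Reading word of a reverse plane partition: in each column circle only the bottommost
occurrence of each value, then read circled entries row by row, top to bottom. -/
def rppWordAux : List (List ℕ) → List ℕ
  | [] => []
  | [r] => r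
  | r :: r' :: rest => circMark r r' ++ rppWordAux (r' :: rest)

/-! ### Evaluations, monomials, signs -/

/-- The exponent vector (evaluation) of a word: the multiplicity of each letter. -/
noncomputable def mono (w : List ℕ) : ℕ →₀ ℕ := (w.map fun i => Finsupp.single i 1).sum

/-- All entries of a set-valued tableau. -/
def svtEntries (rows : List (List Cell)) : List ℕ := (rows.map List.flatten).flatten

def numEntries (rows : List (List Cell)) : ℕ := (svtEntries rows).length

def numCells {α : Type*} (rows : List (List α)) : ℕ := (rows.map List.length).sum

/-- The sign exponent ε(S) = |ev(S)| − |shape(S)|. -/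
def eps (rows : List (List Cell)) : ℕ := numEntries rows - numCells rows

/-- The evaluation `(α_1, α_2, …)` given by a list (letter `i+1` occurs `l.get i` times). -/
noncomputable def listToEval (l : List ℕ) : ℕ →₀ ℕ := ((l.zipIdx.map Prod.swap).map (fun p => Finsupp.single (p.1 + 1) p.2)).sum

/-! ### Coefficients of Schur, dual stable Grothendieck, and stable Grothendieck functions -/

/-- Coefficient of the monomial `x^d` in the Schur function `s_l`:
the number of semistandard tableaux of shape `l` and evaluation `d`. -/
noncomputable def coeffS (l : List ℕ) (d : ℕ →₀ ℕ) : ℕ :=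
  {T : SSYT | shapeOf T.1 = l ∧ mono T.1.flatten = d}.ncard

/-- Coefficient of `x^d` in the dual stable Grothendieck polynomial `g_l`:
the number of reverse plane partitions of shape `l` and evaluation `d`
(the evaluation counts, for each letter, the number of columns containing it;
equivalently, the multiplicities in the reading word). -/
noncomputable def coeffg (l : List ℕ) (d : ℕ →₀ ℕ) : ℕ :=
  {R : RPP | shapeOf R.1 = l ∧ mono (rppWordAux R.1) = d}.ncard

/-- Coefficient of `x^d` in the stable Grothendieck function `G_l`:
the signed number of set-valued tableaux of shape `l` and evaluation `d`
(each such tableau has sign `(−1)^{|d|−|l|}`). -/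
noncomputable def coeffG (l : List ℕ) (d : ℕ →₀ ℕ) : ℤ :=
  (-1) ^ (d.sum (fun _ n => n) - l.sum) *
    ({S : SVT | shapeOf S.1 = l ∧ mono (svtEntries S.1) = d}.ncard : ℤ)

/-! ### Dilation of set-valued tableaux -/

def HasMulti (rows : List (List Cell)) : Prop := ∃ r ∈ rows, ∃ c ∈ r, 1 < c.length

def toRowN (r : List Cell) : List ℕ := r.map List.headI
def ofRowN (r : List ℕ) : List Cell := r.map (fun v => [v])

/-- Dilation: remove the largest entry `x` of the rightmost multicell of the highest row
containing a multicell and RSK-insert `x` into the strictly higher rows. -/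
def diRows (rows : List (List Cell)) : List (List Cell) :=
  let k := rows.findIdx (fun r => r.any (fun c => 1 < c.length))
  let rk := rows.getD k []
  let j := rk.length - 1 - rk.reverse.findIdx (fun c => 1 < c.length)
  let c := rk.getD j []
  let x := c.getLastD 0
  let newAbove := insert1 ((rows.take k).reverse.map toRowN) x
  (newAbove.map ofRowN).reverse ++ [rk.set j c.dropLast] ++ rows.drop (k + 1)

/-! ### Contraction of reverse plane partitions -/

/-- There is an entry lying directly below an equal entry. -/
def HasColDup (rows : List (List ℕ)) : Prop :=
  ∃ (k j v : ℕ), (rows.getD k [])[j]? = some v ∧ (rows.getD (k + 1) [])[j]? = some v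

/-- Reverse jeu-de-taquin slide of a hole at position `(k, j)`, moving up and to the right
until the hole exits the diagram. -/
def slide : ℕ → List (List ℕ) → ℕ → ℕ → List (List ℕ)
  | 0, rows, _, _ => rows
  | fuel + 1, rows, k, j =>
    let above : Option ℕ := if k = 0 then none else (rows.getD (k - 1) [])[j]?
    let right : Option ℕ := (rows.getD k [])[j + 1]?
    match above, right with
    | none, none => rows.set k ((rows.getD k []).take j)
    | some a, none => slide fuel (rows.set k ((rows.getD k []).set j a)) (k - 1) j
    | none, some b => slide fuel (rows.set k ((rows.getD k []).set j b)) k (j + 1)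
    | some a, some b =>
      if a ≤ b then slide fuel (rows.set k ((rows.getD k []).set j a)) (k - 1) j
      else slide fuel (rows.set k ((rows.getD k []).set j b)) k (j + 1)

/-- Contraction: locate the rightmost cell, in the row above the highest row containing an
entry directly below an equal entry, that equals the cell below it; replace it by a marker
and slide it out by reverse jeu-de-taquin. -/
def coRows (rows : List (List ℕ)) : List (List ℕ) :=
  let k := (List.range rows.length).findIdx (fun k =>
    (((rows.getD k []).zipIdx.map Prod.swap).any (fun p => (rows.getD (k + 1) [])[p.1]? == some p.2)))
  let up := rows.getD k []
  let low := rows.getD (k + 1) []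
  let j := ((List.range up.length).filter
      (fun j => up[j]?.isSome && (up[j]? == low[j]?))).foldl max 0
  slide (numCells rows + 1) rows k j

/-! ### Charge -/

/-- Charge of a standard word (a word containing each of `1, …, n` exactly once). -/
def chPerm (w : List ℕ) : ℕ :=
  ∑ k ∈ Finset.Icc 2 w.length,
    if w.idxOf (k - 1) < w.idxOf k then w.length + 1 - k else 0

def idxsOf (w : List ℕ) (a : ℕ) : List ℕ := ((w.zipIdx.map Prod.swap).filter (fun q => q.2 == a)).map Prod.fst

/-- The rightmost index `< p` in `l`, or, failing that, the rightmost index in `l`. -/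
def bestIdx (l : List ℕ) (p : ℕ) : Option ℕ :=
  match (l.filter (· < p)).max? with
  | some q => some q
  | none => l.max?

/-- Mark positions of successive letters `1, 2, 3, …`, scanning right to left cyclically. -/
def markGo (w : List ℕ) : ℕ → ℕ → List ℕ → List ℕ
  | 0, _, acc => acc
  | fuel + 1, p, acc =>
    match bestIdx (idxsOf w (acc.length + 1)) p with
    | none => acc
    | some q => markGo w fuel q (q :: acc)

/-- Indices of the first charge subword of `w`. -/
def chargeIdxs (w : List ℕ) : List ℕ := markGo w (w.foldr max 0) w.length []

/-- The first charge subword of `w`. -/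
def subw (w : List ℕ) : List ℕ :=
  ((chargeIdxs w).insertionSort (· ≤ ·)).map (fun i => w.getD i 0)

/-- The word remaining after removing the first charge subword. -/
def restw (w : List ℕ) : List ℕ :=
  ((w.zipIdx.map Prod.swap).filter (fun q => !(chargeIdxs w).contains q.1)).map Prod.snd

def chAux : ℕ → List ℕ → ℕ
  | 0, _ => 0
  | fuel + 1, w => if w.isEmpty then 0 else chPerm (subw w) + chAux fuel (restw w)

/-- Charge of a word of partition content. -/
def charge (w : List ℕ) : ℕ := chAux w.length w

/-! ### Yamanouchi condition -/

/-- `w` is Yamanouchi with respect to the letters `lo, lo+1, …, hi`: every suffix has at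
least as many `r`'s as `(r+1)`'s for consecutive letters in the range. -/
def Yam (w : List ℕ) (lo hi : ℕ) : Prop :=
  ∀ t : List ℕ, t <:+ w → ∀ r, lo ≤ r → r < hi → t.count (r + 1) ≤ t.count r

/-! ### Elegant fillings -/

/-- Cell `(i, j)` (row `i` from the bottom, 0-indexed) lies in the skew shape outer/inner. -/
def InSkew (inner outer : List ℕ) (i j : ℕ) : Prop :=
  inner.getD i 0 ≤ j ∧ j < outer.getD i 0

/-- An elegant filling of the skew shape outer/inner: a skew semistandard filling whose
entries in the `i`-th row from the bottom (1-indexed) are positive and at most `i − 1`. -/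
def IsElegant (inner outer : List ℕ) (F : ℕ → ℕ → ℕ) : Prop :=
  (∀ i, inner.getD i 0 ≤ outer.getD i 0) ∧
  (∀ i j, ¬ InSkew inner outer i j → F i j = 0) ∧
  (∀ i j, InSkew inner outer i j → 1 ≤ F i j ∧ F i j ≤ i) ∧
  (∀ i j j', InSkew inner outer i j → InSkew inner outer i j' → j ≤ j' → F i j ≤ F i j') ∧
  (∀ i j, InSkew inner outer i j → InSkew inner outer (i + 1) j → F i j < F (i + 1) j)

/-- A strict elegant filling: an elegant filling with strictly increasing rows. -/
def IsStrictElegant (inner outer : List ℕ) (F : ℕ → ℕ → ℕ) : Prop :=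
  IsElegant inner outer F ∧
  ∀ i j j', InSkew inner outer i j → InSkew inner outer i j' → j < j' → F i j < F i j'

/-- `f_inner^outer`? The number of elegant fillings of outer/inner. -/
noncomputable def elegantCount (inner outer : List ℕ) : ℕ :=
  {F : ℕ → ℕ → ℕ | IsElegant inner outer F}.ncard

/-- The number of strict elegant fillings of outer/inner. -/
noncomputable def strictElegantCount (inner outer : List ℕ) : ℕ :=
  {F : ℕ → ℕ → ℕ | IsStrictElegant inner outer F}.ncard

/-! ### Auxiliary lemmas for the dilation theorem -/

lemma headI_mem' {α : Type*} [Inhabited α] {l : List α} (h : l ≠ []) : l.headI ∈ l := by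
  cases l with
  | nil => exact absurd rfl h
  | cons a t => simp

lemma getElem?_zero_eq_headI {α : Type*} [Inhabited α] {l : List α} (h : l ≠ []) :
    l[0]? = some l.headI := by
  cases l with
  | nil => exact absurd rfl h
  | cons a t => simp

lemma chain'_imp_mem {α : Type*} {R S : α → α → Prop} {l : List α} (h : l.Chain' R)
    (himp : ∀ a ∈ l, ∀ b ∈ l, R a b → S a b) : l.Chain' S := by
  induction l with
  | nil => simp [List.Chain']
  | cons a l ih =>
    rw [List.Chain', List.isChain_cons] at h ⊢
    refine ⟨fun y hy => himp a (by simp) y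
      (List.mem_cons_of_mem _ (List.mem_of_mem_head? hy)) (h.1 y hy),
      ih h.2 fun a ha b hb hr =>
        himp _ (List.mem_cons_of_mem _ ha) _ (List.mem_cons_of_mem _ hb) hr⟩

lemma rowInsert_cases (x : ℕ) (r : List ℕ) :
    ((∀ y ∈ r, y ≤ x) ∧ rowInsert x r = (r ++ [x], none)) ∨
    (∃ p b, r[p]? = some b ∧ x < b ∧ (∀ i < p, ∀ y, r[i]? = some y → y ≤ x) ∧
      rowInsert x r = (r.set p x, some b)) := by
  induction r with
  | nil => left; exact ⟨by simp, rfl⟩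
  | cons a r ih =>
    by_cases hxa : x < a
    · right
      exact ⟨0, a, by simp, hxa, by simp, by simp [rowInsert, hxa]⟩
    · push_neg at hxa
      rcases ih with ⟨h1, h2⟩ | ⟨p, b, hb, hxb, hmin, heq⟩
      · left
        refine ⟨?_, ?_⟩
        · intro y hy
          rcases List.mem_cons.1 hy with rfl | hy
          · exact hxa
          · exact h1 y hy
        · simp [rowInsert, not_lt.2 hxa, h2]
      · right
        refine ⟨p + 1, b, by simpa using hb, hxb, ?_, ?_⟩
        · intro i hi y hy
          cases i with
          | zero => simp at hy; omega
          | succ i => exact hmin i (by omega) y (by simpa using hy)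
        · simp [rowInsert, not_lt.2 hxa, heq]

@[simp] lemma default_list {α : Type*} : (default : List α) = [] := rfl

lemma mem_of_getElem?' {α : Type*} {l : List α} {i : ℕ} {y : α} (h : l[i]? = some y) :
    y ∈ l := by
  obtain ⟨hlt, rfl⟩ := List.getElem?_eq_some_iff.1 h
  exact List.getElem_mem hlt

lemma head?_eq_headI {α : Type*} [Inhabited α] {l : List α} (h : l ≠ []) :
    l.head? = some l.headI := by
  cases l with
  | nil => exact absurd rfl h
  | cons a t => simp

/-- Validity of an RSK tableau given bottom-row-first (as used by `insert1`). -/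
def Std (t : List (List ℕ)) : Prop :=
  (∀ r ∈ t, r ≠ [] ∧ (∀ y ∈ r, 0 < y) ∧ r.Chain' (· ≤ ·)) ∧
  t.Chain' (fun low up => up.length ≤ low.length ∧
    ∀ (j a b : ℕ), low[j]? = some a → up[j]? = some b → a < b)

lemma insert1_spec : ∀ (t : List (List ℕ)) (x : ℕ), Std t → 0 < x →
    Std (insert1 t x) ∧ insert1 t x ≠ [] ∧
    ∃ p, p ≤ t.headI.length ∧
      (insert1 t x).headI.length = max t.headI.length (p + 1) ∧
      ((insert1 t x).headI)[p]? = some x ∧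
      (∀ i, i ≠ p → ((insert1 t x).headI)[i]? = (t.headI)[i]?) ∧
      (∀ i < p, ∀ y, (t.headI)[i]? = some y → y ≤ x) := by
  intro t
  induction t with
  | nil =>
    intro x _ hx
    refine ⟨⟨?_, by simp [insert1, List.Chain']⟩, by simp [insert1], 0, by simp, by simp [insert1],
      by simp [insert1], ?_, by simp⟩
    · intro r hr
      simp [insert1] at hr
      subst hr
      exact ⟨by simp, by simpa using hx, by simp [List.Chain']⟩
    · intro i hi
      simp only [insert1, List.headI_cons, List.headI_nil, default_list]
      rw [List.getElem?_eq_none (by simp; omega), List.getElem?_eq_none (by simp)]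
  | cons r rest ih =>
    intro x ht hx
    obtain ⟨hrne, hrpos, hrch⟩ := ht.1 r List.mem_cons_self
    have hrest : Std rest :=
      ⟨fun r' h => ht.1 r' (List.mem_cons_of_mem _ h), (List.isChain_cons.1 ht.2).2⟩
    have hchain := (List.isChain_cons.1 ht.2).1
    -- facts about rest.headI
    have hrhd : rest ≠ [] → (rest.headI.length ≤ r.length ∧
        ∀ (j a b : ℕ), r[j]? = some a → rest.headI[j]? = some b → a < b) := by
      intro hrn
      exact hchain rest.headI (by rw [head?_eq_headI hrn]; simp)
    have hrhdlen : rest.headI.length ≤ r.length := by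
      by_cases hrn : rest = []
      · subst hrn; simp
      · exact (hrhd hrn).1
    have hrhdcol : ∀ (j a b : ℕ), r[j]? = some a → rest.headI[j]? = some b → a < b := by
      by_cases hrn : rest = []
      · subst hrn; intro j a b _ hb; simp at hb
      · exact (hrhd hrn).2
    rcases rowInsert_cases x r with ⟨hall, heq⟩ | ⟨p, b, hb, hxb, hmin, heq⟩
    · -- append at the end of the bottom row, no bumping
      have hres : insert1 (r :: rest) x = (r ++ [x]) :: rest := by
        simp [insert1, heq]
      rw [hres]
      have hrowch : (r ++ [x]).Chain' (· ≤ ·) := by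
        rw [List.Chain', List.isChain_iff_pairwise] at hrch ⊢
        rw [List.pairwise_append]
        exact ⟨hrch, by simp, fun a ha b hb => by simp at hb; subst hb; exact hall a ha⟩
      refine ⟨⟨?_, ?_⟩, by simp, r.length, ?_, ?_, ?_, ?_, ?_⟩
      · intro r' hr'
        rcases List.mem_cons.1 hr' with rfl | hr'
        · refine ⟨by simp, ?_, hrowch⟩
          intro y hy
          rcases List.mem_append.1 hy with hy | hy
          · exact hrpos y hy
          · simp at hy; omega
        · exact ht.1 r' (List.mem_cons_of_mem _ hr')
      · rw [List.Chain', List.isChain_cons]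
        refine ⟨?_, (List.isChain_cons.1 ht.2).2⟩
        intro y hy
        obtain ⟨hlen, hcol⟩ := hchain y hy
        refine ⟨by simp; omega, ?_⟩
        intro j a c hja hjc
        have hjlt : j < y.length := (List.getElem?_eq_some_iff.1 hjc).1
        have hjr : j < r.length := lt_of_lt_of_le hjlt hlen
        rw [List.getElem?_append, if_pos hjr] at hja
        exact hcol j a c hja hjc
      · simp
      · simp
      · simp only [List.headI_cons]
        rw [List.getElem?_append, if_neg (by omega)]
        simp
      · intro i hi
        simp only [List.headI_cons]
        rcases lt_or_gt_of_ne hi with hlt | hgt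
        · rw [List.getElem?_append, if_pos hlt]
        · rw [List.getElem?_append, if_neg (by omega)]
          have h1 : r[i]? = none := List.getElem?_eq_none (by omega)
          have h2 : [x][i - r.length]? = none := List.getElem?_eq_none (by simp; omega)
          rw [h1, h2]
      · intro i hi y hy
        exact hall y (mem_of_getElem?' hy)
    · -- bump case
      have hp : p < r.length := (List.getElem?_eq_some_iff.1 hb).1
      have hbval : r[p] = b := (List.getElem?_eq_some_iff.1 hb).2
      have hbpos : 0 < b := lt_trans hx hxb
      have hres : insert1 (r :: rest) x = (r.set p x) :: insert1 rest b := by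
        simp [insert1, heq]
      obtain ⟨hStd', hne', p', hp'le, hlen', hgetp', hother', hmin'⟩ := ih b hrest hbpos
      -- p' ≤ p
      have hp'p : p' ≤ p := by
        by_cases hplt : p < rest.headI.length
        · by_contra hcon
          have h1 := hrhdcol p b (rest.headI)[p] hb (List.getElem?_eq_getElem hplt)
          have h2 := hmin' p (by omega) (rest.headI)[p] (List.getElem?_eq_getElem hplt)
          omega
        · omega
      rw [hres]
      have hsetch : (r.set p x).Chain' (· ≤ ·) := by
        rw [List.Chain', List.isChain_iff_pairwise] at hrch ⊢
        rw [List.pairwise_iff_getElem] at hrch ⊢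
        intro i j hi hj hij
        simp only [List.length_set] at hi hj
        rw [List.getElem_set, List.getElem_set]
        by_cases hipp : p = i
        · subst hipp
          rw [if_pos rfl, if_neg (by omega)]
          have := hrch p j hi hj hij
          omega
        · rw [if_neg hipp]
          by_cases hjpp : p = j
          · subst hjpp
            rw [if_pos rfl]
            exact hmin i (by omega) r[i] (List.getElem?_eq_getElem hi)
          · rw [if_neg hjpp]
            exact hrch i j hi hj hij
      have hsetne : r.set p x ≠ [] :=
        List.length_pos_iff.1 (by rw [List.length_set]; omega)
      refine ⟨⟨?_, ?_⟩, by simp, p, le_of_lt hp, ?_, ?_, ?_, hmin⟩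
      · intro r' hr'
        rcases List.mem_cons.1 hr' with rfl | hr'
        · refine ⟨hsetne, ?_, hsetch⟩
          intro y hy
          rcases List.mem_or_eq_of_mem_set hy with hy | rfl
          · exact hrpos y hy
          · exact hx
        · exact hStd'.1 r' hr'
      · rw [List.Chain', List.isChain_cons]
        refine ⟨?_, hStd'.2⟩
        intro u hu
        rw [head?_eq_headI hne'] at hu
        injection hu with hu; subst hu
        constructor
        · -- lengths
          rw [List.length_set, hlen']
          omega
        · intro jj a c hja hjc
          by_cases hjp' : jj = p'
          · rw [hjp', hgetp'] at hjc
            injection hjc with hjc; subst hjc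
            by_cases hpp : jj = p
            · rw [hpp, List.getElem?_set_self hp] at hja
              injection hja with hja; omega
            · rw [List.getElem?_set_ne (by omega)] at hja
              have := hmin jj (by omega) a hja
              omega
          · rw [hother' jj hjp'] at hjc
            by_cases hjp : jj = p
            · subst hjp
              rw [List.getElem?_set_self hp] at hja
              injection hja with hja; subst hja
              have := hrhdcol jj b c hb hjc
              omega
            · rw [List.getElem?_set_ne (fun hc => hjp hc.symm)] at hja
              exact hrhdcol jj a c hja hjc
      · simp only [List.headI_cons, List.length_set]
        omega
      · simp only [List.headI_cons]
        exact List.getElem?_set_self hp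
      · intro i hi
        simp only [List.headI_cons]
        exact List.getElem?_set_ne (fun hc => hi hc.symm)

lemma le2_subset {c c' d d' : Cell} (h : le2 c d) (hc : ∀ a ∈ c', a ∈ c)
    (hd : ∀ b ∈ d', b ∈ d) : le2 c' d' :=
  fun a ha b hb => h a (hc a ha) b (hd b hb)

lemma lt2_subset {c c' d d' : Cell} (h : lt2 c d) (hc : ∀ a ∈ c', a ∈ c)
    (hd : ∀ b ∈ d', b ∈ d) : lt2 c' d' :=
  fun a ha b hb => h a (hc a ha) b (hd b hb)

lemma headI_eq_getElem {α : Type*} [Inhabited α] {l : List α} (h : l ≠ []) :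
    l.headI = l[0]'(List.length_pos_iff.2 h) := by
  cases l with
  | nil => exact absurd rfl h
  | cons a t => simp

lemma chain_le2_aux {r : List Cell} (h : r.Chain' le2) (hne : ∀ cc ∈ r, cc ≠ []) :
    ∀ (d pp : ℕ) (hpp : pp + d + 1 < r.length),
      le2 (r[pp]'(by omega)) (r[pp + d + 1]'hpp) := by
  intro d
  induction d with
  | zero =>
    intro pp hpp
    have := List.isChain_iff_getElem.1 h pp (by omega)
    simpa using this
  | succ d ihd =>
    intro pp hpp
    have h1 := ihd pp (by omega)
    have h2 := List.isChain_iff_getElem.1 h (pp + d + 1) (by omega)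
    intro a ha b hb
    have hmidne : r[pp + d + 1]'(by omega) ≠ [] := hne _ (List.getElem_mem _)
    have hm := headI_mem' hmidne
    exact le_trans (h1 a ha _ hm) (h2 _ hm b hb)

lemma chain_le2_lt {r : List Cell} (h : r.Chain' le2) (hne : ∀ cc ∈ r, cc ≠ [])
    {pp qq : ℕ} (hlt : pp < qq) (hq : qq < r.length) :
    le2 (r[pp]'(by omega)) (r[qq]'hq) := by
  obtain ⟨d, rfl⟩ : ∃ d, qq = pp + d + 1 := ⟨qq - pp - 1, by omega⟩
  exact chain_le2_aux h hne d pp hq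

/-- The rows strictly above the active row, read bottom-to-top with heads only,
form a valid `Std` tableau. -/
lemma std_of_top (rows : List (List Cell)) (h : SVTRows rows) :
    Std (rows.reverse.map toRowN) := by
  constructor
  · intro r' hr'
    obtain ⟨r, hr, rfl⟩ := List.mem_map.1 hr'
    rw [List.mem_reverse] at hr
    obtain ⟨hne, hcells, hch⟩ := h.1 r hr
    refine ⟨by simp [toRowN]; exact hne, ?_, ?_⟩
    · intro y hy
      obtain ⟨cc, hcc, rfl⟩ := List.mem_map.1 hy
      have hok := hcells cc hcc
      exact hok.2.2 _ (headI_mem' hok.1)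
    · rw [toRowN, List.Chain', List.isChain_map]
      refine chain'_imp_mem hch ?_
      intro a ha b hb hab
      exact hab _ (headI_mem' (hcells a ha).1) _ (headI_mem' (hcells b hb).1)
  · rw [List.Chain', List.isChain_map, List.isChain_reverse]
    refine chain'_imp_mem h.2 ?_
    intro a ha b hb hab
    refine ⟨by simp [toRowN]; exact hab.1, ?_⟩
    intro jj yl yu hyl hyu
    simp only [toRowN, List.getElem?_map, Option.map_eq_some_iff] at hyl hyu
    obtain ⟨cl, hcl, rfl⟩ := hyl
    obtain ⟨cu, hcu, rfl⟩ := hyu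
    have hclne : cl ≠ [] := ((h.1 b hb).2.1 cl (mem_of_getElem?' hcl)).1
    have hcune : cu ≠ [] := ((h.1 a ha).2.1 cu (mem_of_getElem?' hcu)).1
    exact hab.2 jj cu cl hcu hcl _ (headI_mem' hclne) _ (headI_mem' hcune)

lemma getElem_idx_congr {α : Type*} {l : List α} {i1 i2 : ℕ} (h : i1 = i2)
    (h1 : i1 < l.length) : l[i1]'h1 = l[i2]'(h ▸ h1) := by subst h; rfl

/-- If a set-valued tableau `S` has at least one multicell, then its
dilation `di(S)` is again a valid set-valued tableau. -/
theorem dilation_is_svt (S : SVT) (h : HasMulti S.1) : SVTRows (diRows S.1) := by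
  obtain ⟨rows, hS⟩ := S
  obtain ⟨hrows, hchain⟩ := hS
  simp only [HasMulti] at h
  show SVTRows (diRows rows)
  -- the active row
  set k := rows.findIdx (fun r => r.any (fun c => 1 < c.length)) with hkdef
  have hk : k < rows.length := by
    apply List.findIdx_lt_length_of_exists
    obtain ⟨r, hr, cq, hcq, hlen⟩ := h
    exact ⟨r, hr, by rw [List.any_eq_true]; exact ⟨cq, hcq, by simpa using hlen⟩⟩
  have hgetD : rows.getD k [] = rows[k] := List.getD_eq_getElem rows [] hk
  set rk := rows[k] with hrkdef
  have hkP : rk.any (fun c => decide (1 < c.length)) = true := List.findIdx_getElem (w := hk)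
  obtain ⟨c0, hc0mem, hc0len⟩ : ∃ cel ∈ rk, 1 < cel.length := by
    simpa [List.any_eq_true] using hkP
  have hrkmem : rk ∈ rows := by rw [hrkdef]; exact List.getElem_mem hk
  have hrkne : rk ≠ [] := (hrows rk hrkmem).1
  -- the active cell
  set m := rk.reverse.findIdx (fun c => decide (1 < c.length)) with hmdef
  have hm : m < rk.length := by
    have := List.findIdx_lt_length_of_exists (xs := rk.reverse)
      (p := fun c => decide (1 < c.length))
      ⟨c0, List.mem_reverse.2 hc0mem, by simpa using hc0len⟩
    simpa using this
  set j := rk.length - 1 - m with hjdef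
  have hj : j < rk.length := by omega
  have hcval : rk.reverse[m]'(by simpa using hm) = rk[j]'hj := by
    rw [List.getElem_reverse]
  have hcmulti : 1 < (rk[j]'hj).length := by
    have := List.findIdx_getElem (xs := rk.reverse)
      (p := fun c => decide (1 < c.length)) (w := by simpa using hm)
    rw [hcval] at this
    simpa using this
  set cel := rk[j]'hj with hcdef
  have hcD : rk.getD j [] = cel := List.getD_eq_getElem rk [] hj
  have hcmem : cel ∈ rk := by rw [hcdef]; exact List.getElem_mem hj
  have hok : cellOK cel := (hrows rk hrkmem).2.1 cel hcmem
  have hcne : cel ≠ [] := hok.1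
  set x := cel.getLastD 0 with hxdef
  have hxval : x = cel.getLast hcne := by
    rw [hxdef, List.getLastD_eq_getLast?, List.getLast?_eq_getLast hcne]; rfl
  have hxmem : x ∈ cel := by rw [hxval]; exact List.getLast_mem hcne
  have hx0 : 0 < x := hok.2.2 x hxmem
  have hsorted : cel.Pairwise (· < ·) := hok.2.1
  have hdrople : ∀ a ∈ cel.dropLast, a < x := by
    intro a ha
    rw [hxval]
    have hsp := hsorted
    conv at hsp => rw [← List.dropLast_append_getLast hcne]
    rw [List.pairwise_append] at hsp
    exact hsp.2.2 a ha _ (by simp)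
  have hdropsub : ∀ a ∈ cel.dropLast, a ∈ cel := fun a ha => (List.dropLast_sublist cel).mem ha
  have hdropne : cel.dropLast ≠ [] := by
    apply List.length_pos_iff.1; rw [List.length_dropLast]; omega
  have hheadlt : cel.headI < x := by
    apply hdrople
    rw [headI_eq_getElem hcne]
    have h0 : 0 < cel.dropLast.length := by rw [List.length_dropLast]; omega
    have hdl : cel.dropLast[0]'h0 = cel[0]'(by omega) := List.getElem_dropLast h0
    rw [← hdl]
    exact List.getElem_mem h0
  -- the tableau strictly above, bottom-to-top, single entries
  set A := (rows.take k).reverse.map toRowN with hAdef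
  have hAstd : Std A := by
    have htake : SVTRows (rows.take k) :=
      ⟨fun r hr => hrows r (List.take_subset k rows hr), hchain.take k⟩
    exact std_of_top _ htake
  obtain ⟨hBstd, hBne, p, hple, hBlen, hBget, hBother, hBmin⟩ := insert1_spec A x hAstd hx0
  set B := insert1 A x with hBdef
  set u := B.headI with hudef
  -- consecutive-pair facts of the original tableau
  have hpair : ∀ i (h1 : i + 1 < rows.length),
      (rows[i]'(by omega)).length ≤ (rows[i+1]'h1).length ∧
      ∀ (jj : ℕ) (cu cl : Cell), (rows[i]'(by omega))[jj]? = some cu →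
        (rows[i+1]'h1)[jj]? = some cl → lt2 cl cu := by
    intro i h1
    have := List.isChain_iff_getElem.1 hchain i (by omega)
    simpa using this
  -- facts about the bottom row of A
  have hAheadnil : k = 0 → A.headI = [] := by
    intro h0
    rw [hAdef, h0]
    simp
  have hAheadpos : ∀ (_ : 0 < k), A.headI = toRowN (rows[k-1]'(by omega)) := by
    intro h0
    have hlenrev : ((rows.take k).reverse).length = k := by
      simp [List.length_take]
      omega
    have h1 : (rows.take k).reverse ≠ [] := by
      apply List.length_pos_iff.1
      omega
    have h2 : A.headI = toRowN ((rows.take k).reverse.headI) := by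
      rw [hAdef]
      cases hcc : (rows.take k).reverse with
      | nil => exact absurd hcc h1
      | cons a t => simp
    rw [h2]
    congr 1
    rw [headI_eq_getElem h1, List.getElem_reverse, List.getElem_take]
    exact getElem_idx_congr (by simp [List.length_take]; omega)
      (by simp [List.length_take]; omega)
  have hkk : ∀ (_ : 0 < k), rows[k-1+1]'(by omega) = rk := by
    intro h0
    rw [hrkdef]
    exact getElem_idx_congr (by omega) (by omega)
  have hAhl : A.headI.length ≤ rk.length := by
    rcases Nat.eq_zero_or_pos k with h0 | h0
    · rw [hAheadnil h0]; simp
    · rw [hAheadpos h0]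
      have hle := (hpair (k-1) (by omega)).1
      rw [hkk h0] at hle
      simpa [toRowN] using hle
  have hAcol : ∀ i y, A.headI[i]? = some y → ∀ (hi : i < rk.length),
      ∀ a ∈ rk[i]'hi, a < y := by
    intro i y hy hi a ha
    rcases Nat.eq_zero_or_pos k with h0 | h0
    · rw [hAheadnil h0] at hy; simp at hy
    · rw [hAheadpos h0] at hy
      simp only [toRowN, List.getElem?_map, Option.map_eq_some_iff] at hy
      obtain ⟨cu, hcu, rfl⟩ := hy
      have hcune : cu ≠ [] :=
        ((hrows _ (List.getElem_mem (by omega : k - 1 < rows.length))).2.1 cu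
          (mem_of_getElem?' hcu)).1
      have h4 : (rows[k-1+1]'(by omega))[i]? = some (rk[i]'hi) := by
        rw [hkk h0]
        exact List.getElem?_eq_getElem hi
      have hcol := (hpair (k-1) (by omega)).2 i cu (rk[i]'hi) hcu h4
      exact hcol a ha _ (headI_mem' hcune)
  -- p ≤ j
  have hpj : p ≤ j := by
    by_cases hjA : j < A.headI.length
    · by_contra hcon
      push_neg at hcon
      have hyj := List.getElem?_eq_getElem hjA
      have hxj : x ∈ rk[j]'hj := by rw [← hcdef]; exact hxmem
      have h5 := hAcol j _ hyj hj x hxj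
      have h6 := hBmin j (by omega) _ hyj
      omega
    · omega
  -- the modified active row
  set rk' := rk.set j cel.dropLast with hrk'def
  have hrk'len : rk'.length = rk.length := List.length_set
  have hrk'ne : rk' ≠ [] :=
    List.length_pos_iff.1 (by rw [hrk'len]; exact List.length_pos_iff.2 hrkne)
  have hrk'get : ∀ i (hi : i < rk.length),
      rk'[i]'(by rw [hrk'len]; exact hi) = if j = i then cel.dropLast else rk[i]'hi :=
    fun i hi => List.getElem_set _
  have hrk'cells : ∀ cc ∈ rk', cellOK cc := by
    intro cc hcc
    rcases List.mem_or_eq_of_mem_set hcc with hcc | rfl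
    · exact (hrows rk hrkmem).2.1 cc hcc
    · exact ⟨hdropne, hsorted.sublist (List.dropLast_sublist cel),
        fun a ha => hok.2.2 a (hdropsub a ha)⟩
  have hrkchain := (hrows rk hrkmem).2.2
  have hrkcne : ∀ cc ∈ rk, cc ≠ [] := fun cc hcc => ((hrows rk hrkmem).2.1 cc hcc).1
  have hrk'chain : rk'.Chain' le2 := by
    apply List.isChain_iff_getElem.2
    intro i hi
    rw [hrk'len] at hi
    have hbase : le2 (rk[i]'(by omega)) (rk[i+1]'(by omega)) := by
      have := List.isChain_iff_getElem.1 hrkchain i (by omega)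
      simpa using this
    rw [hrk'get i (by omega), hrk'get (i+1) (by omega)]
    by_cases h2 : j = i
    · rw [if_pos h2, if_neg (by omega)]
      refine le2_subset hbase ?_ (fun b hb => hb)
      intro a ha
      have := hdropsub a ha
      rw [hcdef, getElem_idx_congr h2 hj] at this
      exact this
    · rw [if_neg h2]
      by_cases h3 : j = i + 1
      · rw [if_pos h3]
        refine le2_subset hbase (fun a ha => ha) ?_
        intro b hb
        have := hdropsub b hb
        rw [hcdef, getElem_idx_congr h3 hj] at this
        exact this
      · rw [if_neg h3]
        exact hbase
  -- glue facts between the inserted tableau and the modified row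
  have hulen : u.length ≤ rk.length := by
    rw [hBlen]
    omega
  have hucol : ∀ (i yv : ℕ) (cl : Cell), u[i]? = some yv → rk'[i]? = some cl → ∀ a ∈ cl, a < yv := by
    intro i yv cl hyu hycl a ha
    have hilen : i < rk.length := by
      have := (List.getElem?_eq_some_iff.1 hycl).1
      rw [hrk'len] at this
      exact this
    by_cases hip : i = p
    · subst hip
      rw [hBget] at hyu
      injection hyu with hyu; subst hyu
      by_cases hij : i = j
      · have : rk'[i]? = some cel.dropLast := by
          rw [hij, hrk'def]
          exact List.getElem?_set_self (by omega)
        rw [this] at hycl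
        injection hycl with hycl; subst hycl
        exact hdrople a ha
      · have hiplt : i < j := by omega
        rw [hrk'def, List.getElem?_set_ne (by omega)] at hycl
        obtain ⟨hlt2, rfl⟩ := List.getElem?_eq_some_iff.1 hycl
        have hle := chain_le2_lt hrkchain hrkcne hiplt hj
        have h7 : a ≤ cel.headI := by
          refine hle a ha _ ?_
          rw [hcdef]
          exact headI_mem' (by rw [← hcdef]; exact hcne)
        omega
    · rw [hBother i hip] at hyu
      have h8 := hAcol i yv hyu hilen
      by_cases hij : i = j
      · have : rk'[i]? = some cel.dropLast := by
          rw [hij, hrk'def]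
          exact List.getElem?_set_self (by omega)
        rw [this] at hycl
        injection hycl with hycl; subst hycl
        have h9 : a ∈ rk[i]'hilen := by
          have := hdropsub a ha
          rw [hcdef, getElem_idx_congr hij.symm hj] at this
          exact this
        exact h8 a h9
      · rw [hrk'def, List.getElem?_set_ne (by omega)] at hycl
        obtain ⟨hlt2, rfl⟩ := List.getElem?_eq_some_iff.1 hycl
        exact h8 a ha
  -- rewrite the goal
  have hdi : diRows rows =
      ((B.map ofRowN).reverse ++ [rk']) ++ rows.drop (k+1) := by
    simp only [diRows]
    rw [← hkdef, hgetD, ← hmdef, ← hjdef, hcD, ← hxdef, ← hAdef, ← hBdef, ← hrk'def]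
  rw [hdi]
  constructor
  · -- each row is valid
    intro r hr
    rcases List.mem_append.1 hr with hr | hr
    · rcases List.mem_append.1 hr with hr | hr
      · rw [List.mem_reverse] at hr
        obtain ⟨b, hb, rfl⟩ := List.mem_map.1 hr
        obtain ⟨hbne, hbpos, hbch⟩ := hBstd.1 b hb
        refine ⟨by simp [ofRowN]; exact hbne, ?_, ?_⟩
        · intro cc hcc
          obtain ⟨v, hv, rfl⟩ := List.mem_map.1 hcc
          exact ⟨by simp, List.pairwise_singleton _ v, by simpa using hbpos v hv⟩
        · rw [ofRowN, List.Chain', List.isChain_map]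
          refine chain'_imp_mem hbch ?_
          intro a _ b' _ hab q hq w hw
          simp at hq hw
          subst hq; subst hw
          exact hab
      · simp at hr
        subst hr
        exact ⟨hrk'ne, hrk'cells, hrk'chain⟩
    · exact hrows r (List.drop_subset _ _ hr)
  · -- the column conditions
    rw [List.Chain', List.isChain_append]
    refine ⟨?_, hchain.drop (k+1), ?_⟩
    · rw [List.isChain_append]
      refine ⟨?_, List.isChain_singleton _, ?_⟩
      · -- within the inserted tableau
        rw [List.isChain_reverse, List.isChain_map]
        refine chain'_imp_mem hBstd.2 ?_
        intro a _ b _ hab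
        refine ⟨by simp [ofRowN]; exact hab.1, ?_⟩
        intro jj cu cl hcu hcl
        simp only [ofRowN, List.getElem?_map, Option.map_eq_some_iff] at hcu hcl
        obtain ⟨vu, hvu, rfl⟩ := hcu
        obtain ⟨vl, hvl, rfl⟩ := hcl
        intro q hq w hw
        simp at hq hw
        subst hq; subst hw
        exact hab.2 jj q w hvl hvu
      · -- glue: bottom row of inserted tableau over the modified row
        intro last hlast r2 hr2
        simp at hr2
        subst hr2
        rw [List.getLast?_reverse] at hlast
        obtain ⟨t, hBt⟩ : ∃ t, B = u :: t := by
          cases hB : B with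
          | nil => exact absurd hB hBne
          | cons a t => exact ⟨t, by rw [hudef, hB]; simp⟩
        rw [hBt] at hlast
        simp at hlast
        subst hlast
        refine ⟨?_, ?_⟩
        · rw [hrk'len]
          simpa [ofRowN] using hulen
        · intro jj cu cl hcu hcl
          simp only [ofRowN, List.getElem?_map, Option.map_eq_some_iff] at hcu
          obtain ⟨vu, hvu, rfl⟩ := hcu
          intro q hq w hw
          simp at hw
          subst hw
          exact hucol jj w cl hvu hcl q hq
    · -- glue: the modified row over the rows below
      intro last hlast r2 hr2
      rw [List.getLast?_concat] at hlast
      simp at hlast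
      subst hlast
      rw [List.head?_drop] at hr2
      have hk1 : k + 1 < rows.length := by
        by_contra hcon
        rw [List.getElem?_eq_none (by omega)] at hr2
        simp at hr2
      rw [List.getElem?_eq_getElem hk1] at hr2
      simp at hr2
      subst hr2
      refine ⟨?_, ?_⟩
      · rw [hrk'len]
        have := (hpair k hk1).1
        rw [← hrkdef] at this
        exact this
      · intro jj cu cl hcu hcl
        obtain ⟨hlt, rfl⟩ := List.getElem?_eq_some_iff.1 hcu
        have hjj : jj < rk.length := by rw [← hrk'len]; exact hlt
        have h4 : (rows[k]'hk)[jj]? = some (rk[jj]'hjj) := by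
          rw [← hrkdef]
          exact List.getElem?_eq_getElem hjj
        have hbase := (hpair k hk1).2 jj (rk[jj]'hjj) cl h4 hcl
        refine lt2_subset hbase (fun a ha => ha) ?_
        intro b hb
        rw [hrk'get jj hjj] at hb
        by_cases hjjj : j = jj
        · rw [if_pos hjjj] at hb
          have := hdropsub b hb
          rw [hcdef, getElem_idx_congr hjjj (hjjj ▸ hj)] at this
          exact this
        · rw [if_neg hjjj] at hb
          exact hb


end KG
end

section
/- If a symmetric function f has tableaux Schur expansion f = Σ_{T ∈ 𝐓(α)} wt(T) s_{sh(T)} with 𝐓(α) nonempty and closed in the sense that the associated set 𝐒(α) of set-valued tableaux (those whose reading word RSK-inserts to an element of 𝐓(α)) is finite, then Σ_{S ∈ 𝐒(α)} (−1)^{ε(S)} wt(S) = wt(S₀), where S₀ is the unique element of 𝐓(α) of single-row shape. -/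
namespace KG

/-! ### Auxiliary development for the proof -/

section Aux
open List

/-- maximum entry of a (sorted) cell -/
abbrev maxC (c : Cell) : ℕ := c.getLastD 0

/-- all cells of a row are singletons -/
def AllSing (r : List Cell) : Prop := ∀ c ∈ r, c.length ≤ 1

lemma cell_eq_singleton {c : Cell} (hne : c ≠ []) (hs : c.length ≤ 1) : c = [c.headI] := by
  match c with
  | [] => exact absurd rfl hne
  | [a] => rfl
  | a :: b :: t => simp at hs

lemma dropLast_concat_maxC {c : Cell} (hne : c ≠ []) :
    c.dropLast ++ [maxC c] = c := by
  have h := List.dropLast_append_getLast hne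
  rwa [show c.getLast hne = maxC c by
    rw [maxC, List.getLastD_eq_getLast?, List.getLast?_eq_getLast hne]
    rfl] at h

lemma maxC_mem {c : Cell} (hne : c ≠ []) : maxC c ∈ c := by
  have h : maxC c = c.getLast hne := by
    rw [maxC, List.getLastD_eq_getLast?, List.getLast?_eq_getLast hne]; rfl
  rw [h]; exact List.getLast_mem hne

lemma maxC_concat (l : List ℕ) (m : ℕ) : maxC (l ++ [m]) = m := by
  rw [maxC, List.getLastD_eq_getLast?, List.getLast?_concat]; rfl

lemma mem_dropLast_lt_maxC {c : Cell} (hs : c.Pairwise (· < ·)) {x : ℕ}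
    (hx : x ∈ c.dropLast) : x < maxC c := by
  have hne : c ≠ [] := by rintro rfl; simp at hx
  have := dropLast_concat_maxC hne
  rw [← this] at hs
  have := (List.pairwise_append.1 hs).2.2
  exact this x hx _ (by simp)

lemma mem_le_maxC {c : Cell} (hs : c.Pairwise (· < ·)) {x : ℕ} (hx : x ∈ c) :
    x ≤ maxC c := by
  have hne : c ≠ [] := by rintro rfl; simp at hx
  rw [← dropLast_concat_maxC hne] at hx
  rcases List.mem_append.1 hx with h | h
  · exact le_of_lt (mem_dropLast_lt_maxC hs h)
  · rw [List.mem_singleton] at h; exact le_of_eq h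

lemma headI_mem {c : Cell} (hne : c ≠ []) : c.headI ∈ c := by
  cases c with
  | nil => exact absurd rfl hne
  | cons a t => simp

lemma headI_lt_maxC {c : Cell} (hs : c.Pairwise (· < ·)) (hlen : 1 < c.length) :
    c.headI < maxC c := by
  have hne : c ≠ [] := by rintro rfl; simp at hlen
  apply mem_dropLast_lt_maxC hs
  have : c.headI ∈ c.dropLast := by
    cases c with
    | nil => simp at hlen
    | cons a t =>
      cases t with
      | nil => simp at hlen
      | cons b t' => simp
  exact this

/-- getElem? of a list with a distinguished middle element -/
lemma mid_get {α : Type*} (a b : List α) (x y : α) (j : ℕ) :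
    (a ++ x :: b)[j]? = if j = a.length then some x else (a ++ y :: b)[j]? := by
  rcases lt_trichotomy j a.length with h | h | h
  · rw [if_neg (by omega), List.getElem?_append_left h, List.getElem?_append_left h]
  · subst h
    rw [if_pos rfl, List.getElem?_append_right le_rfl]
    simp
  · rw [if_neg (by omega), List.getElem?_append_right (by omega),
      List.getElem?_append_right (by omega)]
    have : j - a.length = (j - a.length - 1) + 1 := by omega
    rw [this]
    simp

lemma mid_get_self {α : Type*} (a b : List α) (x : α) :
    (a ++ x :: b)[a.length]? = some x := by
  rw [mid_get a b x x, if_pos rfl]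

lemma getElem?_dropLast' {α : Type*} (l : List α) (j : ℕ) :
    (l.dropLast)[j]? = if j < l.length - 1 then l[j]? else none := by
  rw [List.dropLast_eq_take]
  rcases lt_or_ge j (l.length - 1) with h | h
  · rw [if_pos h, List.getElem?_take_of_lt h]
  · rw [if_neg (by omega), List.getElem?_eq_none]
    simp; omega

lemma mem_of_get? {α : Type*} {l : List α} {j : ℕ} {x : α} (h : l[j]? = some x) :
    x ∈ l := by
  rcases List.getElem?_eq_some_iff.1 h with ⟨hj, rfl⟩
  exact List.getElem_mem hj

/-- le2 is preserved by shrinking either side -/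
lemma le2_subset_left {c c' d : Cell} (h : le2 c d) (hsub : ∀ x ∈ c', x ∈ c) : le2 c' d :=
  fun x hx b hb => h x (hsub x hx) b hb

lemma le2_subset_right {c d d' : Cell} (h : le2 c d) (hsub : ∀ x ∈ d', x ∈ d) : le2 c d' :=
  fun x hx b hb => h x hx b (hsub b hb)

lemma lt2_subset_right {c d d' : Cell} (h : lt2 c d) (hsub : ∀ x ∈ d', x ∈ d) : lt2 c d' :=
  fun x hx b hb => h x hx b (hsub b hb)

lemma lt2_subset_left {c c' d : Cell} (h : lt2 c d) (hsub : ∀ x ∈ c', x ∈ c) : lt2 c' d :=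
  fun x hx b hb => h x (hsub x hx) b hb

/-- in a le2-chain with nonempty cells, everything left of `c` is `le2 c`. -/
lemma chain_le2_left {a : List Cell} {c : Cell} {b : List Cell}
    (h : List.IsChain le2 (a ++ c :: b)) (hne : ∀ x ∈ a, x ≠ ([] : Cell)) :
    ∀ x ∈ a, le2 x c := by
  induction a with
  | nil => simp
  | cons y a ih =>
    intro x hx
    have h' : List.IsChain le2 (a ++ c :: b) := (List.isChain_cons.1 h).2
    rcases List.mem_cons.1 hx with rfl | hx
    · -- le2 x c : chain from x through a to c
      rcases a with _ | ⟨z, a'⟩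
      · exact (List.isChain_cons_cons.1 h).1
      · have h1 : le2 x z := (List.isChain_cons_cons.1 h).1
        have h2 : le2 z c := ih h' (fun t ht => hne t (by simp [ht])) z (by simp)
        intro p hp q hq
        have hzne : z ≠ ([] : Cell) := hne z (by simp)
        obtain ⟨w, hw⟩ := List.exists_mem_of_ne_nil z hzne
        exact le_trans (h1 p hp w hw) (h2 w hw q hq)
    · exact ih h' (fun t ht => hne t (by simp [ht])) x hx

/-- heads of a le2-chain of nonempty cells are weakly increasing -/
lemma chain_headI {r : List Cell} (h : List.IsChain le2 r) (hne : ∀ c ∈ r, c ≠ ([] : Cell)) :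
    List.IsChain (· ≤ ·) (r.map List.headI) := by
  induction r with
  | nil => simp
  | cons c r ih =>
    rcases r with _ | ⟨d, r'⟩
    · simp
    · rw [List.map_cons, List.map_cons, List.isChain_cons_cons]
      constructor
      · exact (List.isChain_cons_cons.1 h).1 _ (headI_mem (hne c (by simp))) _
          (headI_mem (hne d (by simp)))
      · rw [← List.map_cons]
        exact ih (List.isChain_cons_cons.1 h).2 (fun x hx => hne x (List.mem_cons_of_mem _ hx))

lemma pairwise_le_getLastD {l : List ℕ} (h : l.Pairwise (· ≤ ·)) {x : ℕ} (hx : x ∈ l) :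
    x ≤ l.getLastD 0 := by
  have hne : l ≠ [] := by rintro rfl; simp at hx
  have hd := List.dropLast_append_getLast hne
  have hlast : l.getLast hne = l.getLastD 0 := by
    rw [List.getLastD_eq_getLast?, List.getLast?_eq_getLast hne]; rfl
  rw [← hd] at hx h
  rcases List.mem_append.1 hx with h' | h'
  · have := (List.pairwise_append.1 h).2.2 x h' (l.getLast hne) (by simp)
    rw [hd, hlast] at *; omega
  · simp at h'; rw [hd] at *; rw [h', hlast]

end Aux


section Aux2
open List

/-- split a row at its rightmost multicell -/
def splitRM : List Cell → Option (List Cell × Cell × List Cell)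
  | [] => none
  | c :: r =>
    match splitRM r with
    | some (a, d, b) => some (c :: a, d, b)
    | none => if 1 < c.length then some ([], c, r) else none

lemma allSing_of_splitRM_none : ∀ {r : List Cell}, splitRM r = none → AllSing r := by
  intro r
  induction r with
  | nil => intro _; intro x hx; simp at hx
  | cons c r ih =>
    intro h
    rcases h' : splitRM r with _ | ⟨a, d, b⟩
    · simp only [splitRM, h'] at h
      split at h <;> rename_i hc
      · simp at h
      · intro x hx
        rcases List.mem_cons.1 hx with rfl | hx
        · omega
        · exact ih h' x hx
    · simp only [splitRM, h'] at h
      simp at h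

lemma splitRM_eq_none {r : List Cell} (h : AllSing r) : splitRM r = none := by
  induction r with
  | nil => rfl
  | cons c r ih =>
    have hr : splitRM r = none := ih (fun x hx => h x (List.mem_cons_of_mem _ hx))
    simp only [splitRM, hr]
    rw [if_neg]
    have := h c (by simp)
    omega

lemma splitRM_some {r a c b} (h : splitRM r = some (a, c, b)) :
    r = a ++ c :: b ∧ 1 < c.length ∧ AllSing b := by
  induction r generalizing a with
  | nil => simp [splitRM] at h
  | cons x r ih =>
    rcases h' : splitRM r with _ | ⟨a', d', b'⟩ <;> simp only [splitRM, h'] at h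
    · split at h <;> rename_i hc
      · simp only [Option.some.injEq, Prod.mk.injEq] at h
        obtain ⟨rfl, rfl, rfl⟩ := h
        exact ⟨rfl, hc, allSing_of_splitRM_none h'⟩
      · simp at h
    · simp only [Option.some.injEq, Prod.mk.injEq] at h
      obtain ⟨rfl, rfl, rfl⟩ := h
      obtain ⟨h1, h2, h3⟩ := ih h'
      exact ⟨by rw [h1]; rfl, h2, h3⟩

lemma splitRM_eq_some {a c b : List _} (hc : 1 < c.length) (hb : AllSing b) :
    splitRM (a ++ c :: b) = some (a, c, b) := by
  induction a with
  | nil =>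
    rw [List.nil_append]
    simp only [splitRM, splitRM_eq_none hb]
    rw [if_pos hc]
  | cons x a ih =>
    rw [List.cons_append]
    simp only [splitRM, ih]

/-- insert `m` into the rightmost cell whose max is `< m` -/
def insR (m : ℕ) : List Cell → List Cell
  | [] => []
  | c :: r => if r.any (fun d => decide (maxC d < m)) then c :: insR m r else (c ++ [m]) :: r

lemma insR_eq {m : ℕ} {a : List Cell} {d : Cell} {b : List Cell}
    (hd : maxC d < m) (hb : ∀ x ∈ b, ¬ maxC x < m) :
    insR m (a ++ d :: b) = a ++ (d ++ [m]) :: b := by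
  induction a with
  | nil =>
    rw [List.nil_append, insR, if_neg]
    · exact (List.nil_append _).symm
    · rw [List.any_eq_true]
      push_neg
      intro x hx
      simpa using hb x hx
  | cons x a ih =>
    rw [List.cons_append, insR, if_pos, ih]
    · rfl
    · rw [List.any_eq_true]
      exact ⟨d, by simp, by simpa using hd⟩

lemma exists_split_qual {m : ℕ} {l : List Cell} (hq : ∃ c ∈ l, maxC c < m) :
    ∃ a d b, l = a ++ d :: b ∧ maxC d < m ∧ ∀ x ∈ b, ¬ maxC x < m := by
  induction l with
  | nil => simp at hq
  | cons c r ih =>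
    by_cases h : ∃ x ∈ r, maxC x < m
    · obtain ⟨a, d, b, h1, h2, h3⟩ := ih h
      exact ⟨c :: a, d, b, by rw [h1]; rfl, h2, h3⟩
    · obtain ⟨x, hx, hxq⟩ := hq
      rcases List.mem_cons.1 hx with rfl | hx
      · exact ⟨[], x, r, rfl, hxq, fun y hy hy' => h ⟨y, hy, hy'⟩⟩
      · exact absurd ⟨x, hx, hxq⟩ h

/-! word lemmas -/

lemma svtWordRows_cons (r : List Cell) (rest : List (List Cell)) :
    svtWordRows (r :: rest) = svtRowWord r ++ svtWordRows rest := by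
  simp [svtWordRows]

lemma svtWordRows_nil : svtWordRows [] = [] := rfl

lemma tailsW_eq_nil {r : List Cell} (h : AllSing r) :
    ((r.reverse.map (fun c => c.tail.reverse)).flatten : List ℕ) = [] := by
  rw [List.flatten_eq_nil_iff]
  intro l hl
  simp only [List.mem_map, List.mem_reverse] at hl
  obtain ⟨c, hc, rfl⟩ := hl
  have := h c hc
  match c, this with
  | [], _ => rfl
  | [a], _ => rfl

lemma svtRowWord_allSing {r : List Cell} (h : AllSing r) :
    svtRowWord r = r.map List.headI := by
  rw [svtRowWord, tailsW_eq_nil h, List.nil_append]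

lemma svtRowWord_split {a : List Cell} {c : Cell} {b : List Cell}
    (hb : AllSing b) (hc : 1 < c.length) :
    svtRowWord (a ++ c :: b) = maxC c :: svtRowWord (a ++ c.dropLast :: b) := by
  have hcne : c ≠ [] := by intro h; rw [h] at hc; simp at hc
  have hdlne : c.dropLast ≠ [] := by
    intro h
    have := c.length_dropLast
    rw [h] at this; simp at this; omega
  have hdl : c.dropLast ++ [maxC c] = c := dropLast_concat_maxC hcne
  have htail : c.tail.reverse = maxC c :: c.dropLast.tail.reverse := by
    obtain ⟨x, t, hxt⟩ := List.exists_cons_of_ne_nil hdlne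
    have h1 : c.tail = c.dropLast.tail ++ [maxC c] := by
      conv_lhs => rw [← hdl]
      rw [hxt]; rfl
    rw [h1, List.reverse_append]; rfl
  have hhead : c.headI = c.dropLast.headI := by
    obtain ⟨x, t, hxt⟩ := List.exists_cons_of_ne_nil hdlne
    conv_lhs => rw [← hdl]
    rw [hxt]; rfl
  have expand : ∀ (c' : Cell), svtRowWord (a ++ c' :: b) =
      (c'.tail.reverse ++ (a.reverse.map (fun c => c.tail.reverse)).flatten)
        ++ (a.map List.headI ++ c'.headI :: b.map List.headI) := by
    intro c'
    simp only [svtRowWord, List.reverse_append, List.reverse_cons, List.map_append,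
      List.flatten_append, List.map_cons, List.flatten_cons, List.append_assoc,
      List.singleton_append, tailsW_eq_nil hb, List.nil_append, List.append_nil,
      List.map_nil, List.flatten_nil]
  rw [expand c, expand c.dropLast, htail, hhead]
  simp

end Aux2


section Aux3
open List

/-- row validity -/
def RowOK (r : List Cell) : Prop := r ≠ [] ∧ (∀ c ∈ r, cellOK c) ∧ r.IsChain le2

/-- column relation between consecutive rows -/
def ColR (up low : List Cell) : Prop :=
  up.length ≤ low.length ∧
    ∀ (j : ℕ) (cu cl : Cell), up[j]? = some cu → low[j]? = some cl → lt2 cl cu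

lemma SVTRows_def (rows : List (List Cell)) :
    SVTRows rows ↔ (∀ r ∈ rows, RowOK r) ∧ rows.IsChain ColR := Iff.rfl

lemma chain_le2_right {c : Cell} {b : List Cell} (h : List.IsChain le2 (c :: b))
    (hne : ∀ x ∈ b, x ≠ ([] : Cell)) : ∀ x ∈ b, le2 c x := by
  induction b generalizing c with
  | nil => simp
  | cons d b ih =>
    intro x hx
    have h1 : le2 c d := (List.isChain_cons_cons.1 h).1
    rcases List.mem_cons.1 hx with rfl | hx
    · exact h1
    · have h2 : le2 d x := ih (List.isChain_cons_cons.1 h).2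
        (fun t ht => hne t (List.mem_cons_of_mem _ ht)) x hx
      intro p hp q hq
      obtain ⟨w, hw⟩ := List.exists_mem_of_ne_nil d (hne d (by simp))
      exact le_trans (h1 p hp w hw) (h2 w hw q hq)

lemma chain'_replace_mid {α : Type*} {R : α → α → Prop} {a b : List α} {c c' : α}
    (h : List.IsChain R (a ++ c :: b)) (h1 : ∀ x ∈ a.getLast?, R x c → R x c')
    (h2 : ∀ y ∈ b.head?, R c y → R c' y) :
    List.IsChain R (a ++ c' :: b) := by
  rw [List.isChain_append] at h ⊢
  obtain ⟨ha, hcb, hlink⟩ := h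
  refine ⟨ha, ?_, ?_⟩
  · rw [List.isChain_cons] at hcb ⊢
    exact ⟨fun y hy => h2 y hy (hcb.1 y hy), hcb.2⟩
  · intro x hx y hy
    simp only [List.head?_cons, Option.mem_def, Option.some.injEq] at hy
    subst hy
    exact h1 x hx (hlink x hx c (by simp))

lemma colR_replace_low {up a b : List _} {c c' : Cell}
    (h : ColR up (a ++ c :: b))
    (hsub : ∀ cu, lt2 c cu → lt2 c' cu) : ColR up (a ++ c' :: b) := by
  constructor
  · have := h.1; simpa using this
  · intro j cu cl hcu hcl
    rw [mid_get a b c' c j] at hcl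
    split at hcl <;> rename_i hj
    · subst hj
      obtain rfl : c' = cl := by injection hcl
      exact hsub cu (h.2 a.length cu c hcu (mid_get_self a b c))
    · exact h.2 j cu cl hcu hcl

lemma colR_replace_up {low a b : List _} {c c' : Cell}
    (h : ColR (a ++ c :: b) low)
    (hsub : ∀ cl, lt2 cl c → lt2 cl c') : ColR (a ++ c' :: b) low := by
  constructor
  · have := h.1; simp at this ⊢; omega
  · intro j cu cl hcu hcl
    rw [mid_get a b c' c j] at hcu
    split at hcu <;> rename_i hj
    · subst hj
      obtain rfl : c' = cu := by injection hcu
      exact hsub cl (h.2 a.length c cl (mid_get_self a b c) hcl)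
    · exact h.2 j cu cl hcu hcl

/-- the involution, case B -/
def phiB (m : ℕ) (r0 r1 : List Cell) (rest : List (List Cell)) : List (List Cell) :=
  if r0.length ≤ 1 then insR m r1 :: rest else r0.dropLast :: insR m r1 :: rest

/-- the sign-reversing involution -/
def phi (rows : List (List Cell)) : List (List Cell) :=
  match rows with
  | [] => []
  | r0 :: rest =>
    match splitRM r0 with
    | some (a, c, b) => [[maxC c]] :: (a ++ c.dropLast :: b) :: rest
    | none =>
      match rest with
      | [] => r0 :: rest
      | r1 :: rest' =>
        match splitRM r1 with
        | some (a, c, b) =>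
          if (r0.getLastD []).headI ≤ maxC c then
            (r0 ++ [[maxC c]]) :: (a ++ c.dropLast :: b) :: rest'
          else phiB (r0.getLastD []).headI r0 r1 rest'
        | none => phiB (r0.getLastD []).headI r0 r1 rest'

lemma svtRowWord_singleton (m : ℕ) : svtRowWord [[m]] = [m] := rfl

/-- facts extracted from a valid row with a distinguished rightmost multicell -/
lemma row_facts {r0 a b : List _} {c : Cell} (hr : RowOK r0) (he : r0 = a ++ c :: b)
    (hc : 1 < c.length) (hb : AllSing b) :
    cellOK c ∧ (∀ x ∈ a, ∀ p ∈ x, p < maxC c) ∧ (∀ p ∈ c.dropLast, p < maxC c) ∧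
      (∀ x ∈ b, le2 c x) ∧ cellOK c.dropLast ∧ c.dropLast ≠ [] ∧
      List.IsChain le2 (a ++ c.dropLast :: b) := by
  obtain ⟨-, hcells, hchain⟩ := hr
  subst he
  have hcok : cellOK c := hcells c (by simp)
  have hane : ∀ x ∈ a, x ≠ ([] : Cell) := fun x hx =>
    (hcells x (by simp [hx])).1
  have hbne : ∀ x ∈ b, x ≠ ([] : Cell) := fun x hx =>
    (hcells x (by simp [hx])).1
  have hcd : c.dropLast ≠ [] := by
    have := c.length_dropLast
    intro h'
    rw [h'] at this
    simp at this
    omega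
  have hdl : ∀ p ∈ c.dropLast, p < maxC c := fun p hp => mem_dropLast_lt_maxC hcok.2.1 hp
  have hha : ∀ x ∈ a, ∀ p ∈ x, p < maxC c := by
    intro x hx p hp
    have h1 : le2 x c := chain_le2_left hchain hane x hx
    calc p ≤ c.headI := h1 p hp _ (headI_mem hcok.1)
    _ < maxC c := headI_lt_maxC hcok.2.1 hc
  have hcb : ∀ x ∈ b, le2 c x := by
    have h' : List.IsChain le2 (c :: b) := (List.isChain_append.1 hchain).2.1
    exact chain_le2_right h' hbne
  have hcdok : cellOK c.dropLast := by
    refine ⟨hcd, ?_, ?_⟩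
    · exact List.Pairwise.sublist (List.dropLast_sublist c) hcok.2.1
    · exact fun x hx => hcok.2.2 x (List.dropLast_sublist c |>.mem hx)
  refine ⟨hcok, hha, hdl, hcb, hcdok, hcd, ?_⟩
  exact chain'_replace_mid hchain
    (fun x _ hx => le2_subset_right hx (fun p hp => (List.dropLast_sublist c).mem hp))
    (fun y _ hy => le2_subset_left hy (fun p hp => (List.dropLast_sublist c).mem hp))

lemma maxC_dropLast_lt {c : Cell} (hok : cellOK c) (hc : 1 < c.length) :
    maxC c.dropLast < maxC c := by
  have hcd : c.dropLast ≠ [] := by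
    have := c.length_dropLast
    intro h'
    rw [h'] at this; simp at this; omega
  exact mem_dropLast_lt_maxC hok.2.1 (maxC_mem hcd)

/-- Case A0 : the top row contains a multicell. -/
lemma caseA0 {r0 : List Cell} {rest : List (List Cell)} {a b : List Cell} {c : Cell}
    (hsp : splitRM r0 = some (a, c, b)) (h : SVTRows (r0 :: rest)) :
    SVTRows (phi (r0 :: rest)) ∧
    svtWordRows (phi (r0 :: rest)) = svtWordRows (r0 :: rest) ∧
    numCells (phi (r0 :: rest)) = numCells (r0 :: rest) + 1 ∧
    phi (phi (r0 :: rest)) = r0 :: rest := by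
  obtain ⟨he, hc, hb⟩ := splitRM_some hsp
  rw [SVTRows_def] at h
  obtain ⟨hrows, hcol⟩ := h
  have hr0 : RowOK r0 := hrows r0 (by simp)
  obtain ⟨hcok, hha, hdl, hcb, hcdok, hcd, hchain'⟩ := row_facts hr0 he hc hb
  set m := maxC c with hm
  have hphi : phi (r0 :: rest) = [[m]] :: (a ++ c.dropLast :: b) :: rest := by
    simp only [phi, hsp]
    rfl
  have hmpos : 0 < m := hcok.2.2 _ (maxC_mem hcok.1)
  have hfirst : ∀ cl : Cell, (a ++ c.dropLast :: b)[0]? = some cl → lt2 cl [m] := by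
    intro cl hcl
    rcases a with _ | ⟨a0, a'⟩
    · rw [List.nil_append] at hcl
      simp only [List.getElem?_cons_zero, Option.some.injEq] at hcl
      subst hcl
      intro p hp q hq
      rw [List.mem_singleton] at hq
      subst hq
      exact hdl p hp
    · simp only [List.cons_append, List.getElem?_cons_zero, Option.some.injEq] at hcl
      subst hcl
      intro p hp q hq
      rw [List.mem_singleton] at hq
      subst hq
      exact hha a0 (by simp) p hp
  -- validity
  have hval : SVTRows ([[m]] :: (a ++ c.dropLast :: b) :: rest) := by
    rw [SVTRows_def]
    constructor
    · intro r hr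
      rcases List.mem_cons.1 hr with rfl | hr
      · exact ⟨by simp, by
          intro x hx
          rw [List.mem_singleton] at hx
          subst hx
          exact ⟨by simp, by simp, by simpa using hmpos⟩, by simp⟩
      rcases List.mem_cons.1 hr with rfl | hr
      · refine ⟨by simp, ?_, hchain'⟩
        intro x hx
        rcases List.mem_append.1 hx with hx | hx
        · exact (hrows r0 (by simp)).2.1 x (by rw [he]; exact List.mem_append_left _ hx)
        rcases List.mem_cons.1 hx with rfl | hx
        · exact hcdok
        · exact (hrows r0 (by simp)).2.1 x (by rw [he]; simp [hx])
      · exact hrows r (List.mem_cons_of_mem _ hr)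
    · rw [List.isChain_cons_cons]
      constructor
      · constructor
        · simp; omega
        · intro j cu cl hcu hcl
          rcases j with _ | j
          · simp only [List.getElem?_cons_zero, Option.some.injEq] at hcu
            subst hcu
            exact hfirst cl hcl
          · simp at hcu
      · rcases rest with _ | ⟨r1, rest2⟩
        · simp
        · rw [List.isChain_cons_cons]
          have hcol1 : ColR r0 r1 := (List.isChain_cons_cons.1 hcol).1
          rw [he] at hcol1
          refine ⟨colR_replace_up hcol1 ?_, (List.isChain_cons_cons.1 hcol).2⟩
          exact fun cl hcl => lt2_subset_right hcl
              (fun p hp => (List.dropLast_sublist c).mem hp)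
  have hq1 : maxC c.dropLast < m := maxC_dropLast_lt hcok hc
  have hq2 : ∀ x ∈ b, ¬ maxC x < m := by
    intro x hx
    have hxne : x ≠ ([] : Cell) := ((hrows r0 (by simp)).2.1 x (by rw [he]; simp [hx])).1
    have := hcb x hx m (maxC_mem hcok.1) (maxC x) (maxC_mem hxne)
    omega
  have hins : insR m (a ++ c.dropLast :: b) = a ++ c :: b := by
    rw [insR_eq hq1 hq2, dropLast_concat_maxC hcok.1]
  have hmulti : ∀ x ∈ a ++ c.dropLast :: b, 1 < x.length → maxC x < m := by
    intro x hx hlen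
    have hxne : x ≠ ([] : Cell) := by intro h'; rw [h'] at hlen; simp at hlen
    rcases List.mem_append.1 hx with hx | hx
    · exact hha x hx _ (maxC_mem hxne)
    rcases List.mem_cons.1 hx with rfl | hx
    · exact hq1
    · exact absurd hlen (by have := hb x hx; omega)
  have hsingOK : AllSing ([[m]] : List Cell) := by
    intro x hx; rw [List.mem_singleton] at hx; subst hx; simp
  have h1 : splitRM [[m]] = none := splitRM_eq_none hsingOK
  have hgld : (([[m]] : List Cell).getLastD []).headI = m := rfl
  refine ⟨by rw [hphi]; exact hval, ?_, ?_, ?_⟩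
  · rw [hphi, svtWordRows_cons, svtWordRows_cons]
    conv_rhs => rw [he, svtWordRows_cons, svtRowWord_split hb hc]
    rw [svtRowWord_singleton]
    simp
    rw [hm, maxC, List.getLastD_eq_getLast?]
  · rw [hphi, he]
    simp [numCells]
    omega
  · rw [hphi]
    rcases hsp2 : splitRM (a ++ c.dropLast :: b) with _ | ⟨a2, c2, b2⟩
    · show phi _ = _
      simp only [phi, h1, hsp2, hgld]
      show phiB m [[m]] _ rest = _
      rw [phiB, if_pos (by simp), hins, he]
    · obtain ⟨he2, hc2, hb2⟩ := splitRM_some hsp2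
      have hlt : maxC c2 < m := hmulti c2 (by rw [he2]; simp) hc2
      show phi _ = _
      simp only [phi, h1, hsp2, hgld]
      rw [if_neg (by omega)]
      show phiB m [[m]] _ rest = _
      rw [phiB, if_pos (by simp), hins, he]

end Aux3


section Aux4
open List

lemma getLastD_concat' {α : Type*} (l : List α) (x d : α) : (l ++ [x]).getLastD d = x := by
  rw [List.getLastD_eq_getLast?, List.getLast?_concat]; rfl

lemma getLastD_map_headI {r0 : List Cell} (h : r0 ≠ []) :
    (r0.map List.headI).getLastD 0 = (r0.getLastD []).headI := by
  obtain ⟨g, hg⟩ := List.exists_mem_of_ne_nil r0 h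
  have hd := List.dropLast_append_getLast h
  rw [← hd, List.map_append, List.map_singleton, getLastD_concat', getLastD_concat']

/-- any head in a valid row is at most the head of the last cell -/
lemma headI_le_lastHead {r0 : List Cell} (hne : r0 ≠ [])
    (hchain : List.IsChain le2 r0) (hcellne : ∀ x ∈ r0, x ≠ ([] : Cell))
    {j : ℕ} {x : Cell} (hx : r0[j]? = some x) :
    x.headI ≤ (r0.getLastD []).headI := by
  have hpair : (r0.map List.headI).Pairwise (· ≤ ·) :=
    List.isChain_iff_pairwise.1 (chain_headI hchain hcellne)
  have hmem : x.headI ∈ r0.map List.headI := List.mem_map_of_mem (mem_of_get? hx)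
  have := pairwise_le_getLastD hpair hmem
  rwa [getLastD_map_headI hne] at this

/-- Case A1 : top row is all singletons, second row has a multicell with big max. -/
lemma caseA1 {r0 r1 : List Cell} {rest' : List (List Cell)} {a b : List Cell} {c : Cell}
    (hs0 : splitRM r0 = none) (hsp : splitRM r1 = some (a, c, b))
    (hcond : (r0.getLastD []).headI ≤ maxC c)
    (h : SVTRows (r0 :: r1 :: rest')) :
    SVTRows (phi (r0 :: r1 :: rest')) ∧
    svtWordRows (phi (r0 :: r1 :: rest')) = svtWordRows (r0 :: r1 :: rest') ∧
    numCells (phi (r0 :: r1 :: rest')) = numCells (r0 :: r1 :: rest') + 1 ∧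
    phi (phi (r0 :: r1 :: rest')) = r0 :: r1 :: rest' := by
  obtain ⟨he, hc, hb⟩ := splitRM_some hsp
  rw [SVTRows_def] at h
  obtain ⟨hrows, hcol⟩ := h
  have hr0 : RowOK r0 := hrows r0 (by simp)
  have hr1 : RowOK r1 := hrows r1 (by simp)
  obtain ⟨hcok, hha, hdl, hcb, hcdok, hcd, hchain'⟩ := row_facts hr1 he hc hb
  set m := maxC c with hm
  set v := (r0.getLastD []).headI with hv
  have hsing : AllSing r0 := allSing_of_splitRM_none hs0
  have hcellne0 : ∀ x ∈ r0, x ≠ ([] : Cell) := fun x hx => (hr0.2.1 x hx).1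
  have hmpos : 0 < m := hcok.2.2 _ (maxC_mem hcok.1)
  have hphi : phi (r0 :: r1 :: rest') =
      (r0 ++ [[m]]) :: (a ++ c.dropLast :: b) :: rest' := by
    simp only [phi, hs0, hsp]
    rw [if_pos hcond]
  have hcol01 : ColR r0 r1 := (List.isChain_cons_cons.1 hcol).1
  -- the multicell c sits at column ≥ r0.length
  have hja : r0.length ≤ a.length := by
    by_contra h'
    push_neg at h'
    obtain ⟨xu, hxu⟩ : ∃ xu, r0[a.length]? = some xu := by
      have : a.length < r0.length := h'
      exact ⟨r0[a.length], List.getElem?_eq_getElem this⟩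
    have hlow : r1[a.length]? = some c := by rw [he]; exact mid_get_self a b c
    have hlt : lt2 c xu := hcol01.2 a.length xu c hxu hlow
    have h1 : m < xu.headI :=
      hlt m (maxC_mem hcok.1) _ (headI_mem (hcellne0 xu (mem_of_get? hxu)))
    have h2 : xu.headI ≤ v := headI_le_lastHead hr0.1 hr0.2.2 hcellne0 hxu
    omega
  have hlen1 : r1.length = a.length + b.length + 1 := by rw [he]; simp; omega
  -- validity of the image
  have hval : SVTRows ((r0 ++ [[m]]) :: (a ++ c.dropLast :: b) :: rest') := by
    rw [SVTRows_def]
    constructor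
    · intro r hr
      rcases List.mem_cons.1 hr with rfl | hr
      · refine ⟨by simp, ?_, ?_⟩
        · intro x hx
          rcases List.mem_append.1 hx with hx | hx
          · exact hr0.2.1 x hx
          · rw [List.mem_singleton] at hx
            subst hx
            exact ⟨by simp, by simp, by simpa using hmpos⟩
        · rw [List.isChain_append]
          refine ⟨hr0.2.2, by simp, ?_⟩
          intro x hx y hy
          simp only [List.head?_cons, Option.mem_def, Option.some.injEq] at hy
          subst hy
          have hxl : x = r0.getLast hr0.1 := by
            rw [List.getLast?_eq_getLast hr0.1] at hx
            exact (Option.some_inj.1 hx).symm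
          have hxmem : x ∈ r0 := hxl ▸ List.getLast_mem hr0.1
          have hxs : x = [x.headI] := cell_eq_singleton (hcellne0 x hxmem) (hsing x hxmem)
          intro p hp q hq
          rw [List.mem_singleton] at hq
          subst hq
          rw [hxs, List.mem_singleton] at hp
          subst hp
          have : x.headI = v := by
            rw [hv, List.getLastD_eq_getLast?, List.getLast?_eq_getLast hr0.1, ← hxl]
            rfl
          omega
      rcases List.mem_cons.1 hr with rfl | hr
      · refine ⟨by simp, ?_, hchain'⟩
        intro x hx
        rcases List.mem_append.1 hx with hx | hx
        · exact hr1.2.1 x (by rw [he]; exact List.mem_append_left _ hx)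
        rcases List.mem_cons.1 hx with rfl | hx
        · exact hcdok
        · exact hr1.2.1 x (by rw [he]; simp [hx])
      · exact hrows r (by simp [hr])
    · rw [List.isChain_cons_cons]
      constructor
      · constructor
        · simp
          omega
        · intro j cu cl hcu hcl
          rcases lt_trichotomy j r0.length with hj | hj | hj
          · rw [List.getElem?_append_left hj] at hcu
            have hcl' : r1[j]? = some cl := by
              rw [he, List.getElem?_append_left (by omega)]
              rw [List.getElem?_append_left (by omega)] at hcl
              exact hcl
            exact hcol01.2 j cu cl hcu hcl'
          · subst hj
            rw [List.getElem?_append_right le_rfl] at hcu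
            simp only [Nat.sub_self, List.getElem?_cons_zero, Option.some.injEq] at hcu
            subst hcu
            intro p hp q hq
            rw [List.mem_singleton] at hq
            subst hq
            rw [mid_get a b (c.dropLast) c] at hcl
            split at hcl <;> rename_i hj'
            · obtain rfl : c.dropLast = cl := by injection hcl
              exact hdl p hp
            · have hja' : r0.length < a.length := by omega
              rw [List.getElem?_append_left hja'] at hcl
              exact hha cl (mem_of_get? hcl) p hp
          · rw [List.getElem?_eq_none (by simp; omega)] at hcu
            simp at hcu
      · rcases rest' with _ | ⟨r2, rest2⟩
        · simp
        · rw [List.isChain_cons_cons]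
          have hcol2 : ColR r1 r2 := (List.isChain_cons_cons.1 (List.isChain_cons_cons.1 hcol).2).1
          rw [he] at hcol2
          refine ⟨colR_replace_up hcol2 ?_, (List.isChain_cons_cons.1 (List.isChain_cons_cons.1 hcol).2).2⟩
          exact fun cl hcl => lt2_subset_right hcl
            (fun p hp => (List.dropLast_sublist c).mem hp)
  -- ingredients for the return journey
  have hq1 : maxC c.dropLast < m := maxC_dropLast_lt hcok hc
  have hq2 : ∀ x ∈ b, ¬ maxC x < m := by
    intro x hx
    have hxne : x ≠ ([] : Cell) := (hr1.2.1 x (by rw [he]; simp [hx])).1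
    have := hcb x hx m (maxC_mem hcok.1) (maxC x) (maxC_mem hxne)
    omega
  have hins : insR m (a ++ c.dropLast :: b) = a ++ c :: b := by
    rw [insR_eq hq1 hq2, dropLast_concat_maxC hcok.1]
  have hmulti : ∀ x ∈ a ++ c.dropLast :: b, 1 < x.length → maxC x < m := by
    intro x hx hlen
    have hxne : x ≠ ([] : Cell) := by intro h'; rw [h'] at hlen; simp at hlen
    rcases List.mem_append.1 hx with hx | hx
    · exact hha x hx _ (maxC_mem hxne)
    rcases List.mem_cons.1 hx with rfl | hx
    · exact hq1
    · exact absurd hlen (by have := hb x hx; omega)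
  have hsing' : AllSing (r0 ++ [[m]]) := by
    intro x hx
    rcases List.mem_append.1 hx with hx | hx
    · exact hsing x hx
    · rw [List.mem_singleton] at hx; subst hx; simp
  have h1 : splitRM (r0 ++ [[m]]) = none := splitRM_eq_none hsing'
  have hgld : (((r0 ++ [[m]]) : List Cell).getLastD []).headI = m := by
    rw [getLastD_concat']; rfl
  refine ⟨by rw [hphi]; exact hval, ?_, ?_, ?_⟩
  · rw [hphi, svtWordRows_cons, svtWordRows_cons, svtRowWord_allSing hsing']
    conv_rhs => rw [svtWordRows_cons, svtWordRows_cons, svtRowWord_allSing hsing,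
      he, svtRowWord_split hb hc]
    simp
    rw [hm, maxC, List.getLastD_eq_getLast?]
  · rw [hphi, he]
    simp [numCells]
    omega
  · rw [hphi]
    have hlen0' : ¬ (r0 ++ [[m]]).length ≤ 1 := by
      have h' : 1 ≤ r0.length := List.length_pos_iff.2 hr0.1
      rw [List.length_append]
      simp only [List.length_singleton]
      omega
    have hdrop : (r0 ++ [[m]]).dropLast = r0 := List.dropLast_concat
    rcases hsp2 : splitRM (a ++ c.dropLast :: b) with _ | ⟨a2, c2, b2⟩
    · show phi _ = _
      simp only [phi, h1, hsp2]
      rw [hgld]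
      show phiB m _ _ rest' = _
      rw [phiB, if_neg hlen0', hins, hdrop, he]
    · obtain ⟨he2, hc2, hb2⟩ := splitRM_some hsp2
      have hlt : maxC c2 < m := hmulti c2 (by rw [he2]; simp) hc2
      show phi _ = _
      simp only [phi, h1, hsp2]
      rw [hgld, if_neg (by omega)]
      show phiB m _ _ rest' = _
      rw [phiB, if_neg hlen0', hins, hdrop, he]

end Aux4


section Aux5
open List

/-- Case B : top row all singletons, its last entry `m` moves down into row 1. -/
lemma caseB {r0 r1 : List Cell} {rest' : List (List Cell)}
    (hs0 : splitRM r0 = none)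
    (hmq : ∀ x ∈ r1, 1 < x.length → maxC x < (r0.getLastD []).headI)
    (h : SVTRows (r0 :: r1 :: rest')) :
    SVTRows (phiB (r0.getLastD []).headI r0 r1 rest') ∧
    svtWordRows (phiB (r0.getLastD []).headI r0 r1 rest') = svtWordRows (r0 :: r1 :: rest') ∧
    numCells (r0 :: r1 :: rest') = numCells (phiB (r0.getLastD []).headI r0 r1 rest') + 1 ∧
    phi (phiB (r0.getLastD []).headI r0 r1 rest') = r0 :: r1 :: rest' := by
  rw [SVTRows_def] at h
  obtain ⟨hrows, hcol⟩ := h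
  have hr0 : RowOK r0 := hrows r0 (by simp)
  have hr1 : RowOK r1 := hrows r1 (by simp)
  set m := (r0.getLastD []).headI with hm
  have hsing : AllSing r0 := allSing_of_splitRM_none hs0
  have hcellne0 : ∀ x ∈ r0, x ≠ ([] : Cell) := fun x hx => (hr0.2.1 x hx).1
  have hcellne1 : ∀ x ∈ r1, x ≠ ([] : Cell) := fun x hx => (hr1.2.1 x hx).1
  have hlastmem : r0.getLastD [] ∈ r0 := by
    rw [List.getLastD_eq_getLast?, List.getLast?_eq_getLast hr0.1]
    exact List.getLast_mem hr0.1
  have hmpos : 0 < m :=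
    (hr0.2.1 _ hlastmem).2.2 _ (headI_mem (hcellne0 _ hlastmem))
  have hcol01 : ColR r0 r1 := (List.isChain_cons_cons.1 hcol).1
  have hlen01 : r0.length ≤ r1.length := hcol01.1
  -- every cell of r1 under a cell of r0 qualifies
  have hqual : ∀ j, j < r0.length → ∀ y : Cell, r1[j]? = some y → maxC y < m := by
    intro j hj y hy
    obtain ⟨xu, hxu⟩ : ∃ xu, r0[j]? = some xu := ⟨r0[j], List.getElem?_eq_getElem hj⟩
    have hlt : lt2 y xu := hcol01.2 j xu y hxu hy
    have h1 : maxC y < xu.headI :=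
      hlt _ (maxC_mem (hcellne1 y (mem_of_get? hy))) _
        (headI_mem (hcellne0 xu (mem_of_get? hxu)))
    have h2 : xu.headI ≤ m := headI_le_lastHead hr0.1 hr0.2.2 hcellne0 hxu
    omega
  have hr0pos : 0 < r0.length := List.length_pos_iff.2 hr0.1
  have hr1pos : 0 < r1.length := List.length_pos_iff.2 hr1.1
  have hex : ∃ cell ∈ r1, maxC cell < m := by
    refine ⟨r1[0], mem_of_get? (List.getElem?_eq_getElem hr1pos), ?_⟩
    exact hqual 0 hr0pos _ (List.getElem?_eq_getElem hr1pos)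
  obtain ⟨a', d, b', he, hd, hbq⟩ := exists_split_qual hex
  have hdok : cellOK d := hr1.2.1 d (by rw [he]; simp)
  have hdne : d ≠ [] := hdok.1
  have hb'sing : AllSing b' := by
    intro x hx
    by_contra h'
    push_neg at h'
    exact hbq x hx (hmq x (by rw [he]; simp [hx]) h')
  have hd_all_lt : ∀ p ∈ d, p < m := fun p hp =>
    lt_of_le_of_lt (mem_le_maxC hdok.2.1 hp) hd
  set D : Cell := d ++ [m] with hD
  have hDmax : maxC D = m := getLastD_concat' d m 0
  have hDdrop : D.dropLast = d := List.dropLast_concat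
  have hDlen : 1 < D.length := by
    have : 0 < d.length := List.length_pos_iff.2 hdne
    rw [hD, List.length_append]
    simp
    omega
  have hDok : cellOK D := by
    refine ⟨by simp [hD], ?_, ?_⟩
    · exact List.pairwise_append.2 ⟨hdok.2.1, by simp, by simpa using hd_all_lt⟩
    · intro x hx
      rw [hD, List.mem_append] at hx
      rcases hx with hx | hx
      · exact hdok.2.2 x hx
      · rw [List.mem_singleton] at hx; subst hx; exact hmpos
  have hins : insR m r1 = a' ++ D :: b' := by rw [he]; exact insR_eq hd hbq
  have hlenR1 : (a' ++ D :: b').length = r1.length := by rw [he]; simp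
  -- chain of the new row
  have hchainR1 : List.IsChain le2 (a' ++ D :: b') := by
    have hch : List.IsChain le2 (a' ++ d :: b') := by rw [← he]; exact hr1.2.2
    refine chain'_replace_mid hch ?_ ?_
    · intro x _ hx p hp q hq
      rw [hD, List.mem_append] at hq
      rcases hq with hq | hq
      · exact hx p hp q hq
      · rw [List.mem_singleton] at hq
        subst hq
        exact le_of_lt (lt_of_le_of_lt (hx p hp _ (maxC_mem hdne)) hd)
    · intro y hy hdy p hp q hq
      have hymem : y ∈ b' := List.mem_of_mem_head? hy
      rw [hD, List.mem_append] at hp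
      rcases hp with hp | hp
      · exact hdy p hp q hq
      · rw [List.mem_singleton] at hp
        subst hp
        have hymem' : y ∈ r1 := by rw [he]; simp [hymem]
        have hys : y = [y.headI] := cell_eq_singleton (hcellne1 y hymem') (hb'sing y hymem)
        have hq' : q = y.headI := by rw [hys, List.mem_singleton] at hq; exact hq
        have hmaxy : maxC y = y.headI := by rw [hys]; rfl
        have hyq : ¬ maxC y < m := hbq y hymem
        omega
  have hrowR1 : RowOK (a' ++ D :: b') := by
    refine ⟨by simp, ?_, hchainR1⟩
    intro x hx
    rcases List.mem_append.1 hx with hx | hx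
    · exact hr1.2.1 x (by rw [he]; simp [hx])
    rcases List.mem_cons.1 hx with rfl | hx
    · exact hDok
    · exact hr1.2.1 x (by rw [he]; simp [hx])
  -- column relation of the new row with the row below
  have hcolR1low : ∀ r2 ∈ rest'.head?, ColR (a' ++ D :: b') r2 := by
    intro r2 hr2
    have hcol2 : ColR r1 r2 := by
      rcases rest' with _ | ⟨r2', rest2⟩
      · simp at hr2
      · simp only [List.head?_cons, Option.mem_def, Option.some.injEq] at hr2
        subst hr2
        exact (List.isChain_cons_cons.1 (List.isChain_cons_cons.1 hcol).2).1
    rw [he] at hcol2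
    refine colR_replace_up hcol2 ?_
    intro cl hcl p hp q hq
    rw [hD, List.mem_append] at hq
    rcases hq with hq | hq
    · exact hcl p hp q hq
    · rw [List.mem_singleton] at hq
      subst hq
      exact lt_trans (hcl p hp _ (maxC_mem hdne)) hd
  -- word of the new row
  have hword1 : svtRowWord (a' ++ D :: b') = m :: svtRowWord r1 := by
    rw [svtRowWord_split hb'sing hDlen, hDmax, hDdrop, ← he]
  -- the spine of phi ∘ phiB
  have hsplitR1 : splitRM (a' ++ D :: b') = some (a', D, b') := splitRM_eq_some hDlen hb'sing
  by_cases hshort : r0.length ≤ 1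
  · -- short case : r0 = [[m]]
    obtain ⟨x0, hx0⟩ : ∃ x0, r0 = [x0] := by
      rcases r0 with _ | ⟨x0, r0t⟩
      · exact absurd rfl hr0.1
      · rcases r0t with _ | _
        · exact ⟨x0, rfl⟩
        · simp at hshort
    have hx0m : x0 = [m] := by
      have h1 : x0 = [x0.headI] := cell_eq_singleton (hcellne0 x0 (by simp [hx0]))
        (hsing x0 (by simp [hx0]))
      have h2 : x0.headI = m := by rw [hm, hx0]; rfl
      rw [h1, h2]
    have hphiB : phiB m r0 r1 rest' = (a' ++ D :: b') :: rest' := by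
      rw [phiB, if_pos hshort, hins]
    rw [hphiB]
    refine ⟨?_, ?_, ?_, ?_⟩
    · rw [SVTRows_def]
      constructor
      · intro r hr
        rcases List.mem_cons.1 hr with rfl | hr
        · exact hrowR1
        · exact hrows r (by simp [hr])
      · rw [List.isChain_cons]
        refine ⟨hcolR1low, ?_⟩
        exact ((List.isChain_cons_cons.1 hcol).2).tail
    · rw [svtWordRows_cons, hword1]
      conv_rhs => rw [svtWordRows_cons, svtWordRows_cons,
        svtRowWord_allSing hsing, hx0, hx0m]
      simp
    · rw [hx0]
      simp [numCells, he]
      omega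
    · show phi _ = _
      simp only [phi, hsplitR1]
      rw [hDmax, hDdrop, ← he, hx0, hx0m]
  · -- long case
    have hr0len2 : 2 ≤ r0.length := by omega
    have hdl0ne : r0.dropLast ≠ [] := by
      have := r0.length_dropLast
      intro h'
      rw [h'] at this
      simp at this
      omega
    have hsingdl : AllSing r0.dropLast := fun x hx =>
      hsing x ((List.dropLast_sublist r0).mem hx)
    have hlast_eq : r0.dropLast ++ [[m]] = r0 := by
      have h1 := List.dropLast_append_getLast hr0.1
      have h2 : r0.getLast hr0.1 = [m] := by
        have h3 : r0.getLast hr0.1 = r0.getLastD [] := by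
          rw [List.getLastD_eq_getLast?, List.getLast?_eq_getLast hr0.1]; rfl
        rw [h3]
        exact cell_eq_singleton (hcellne0 _ hlastmem) (hsing _ hlastmem)
      rw [← h2]
      exact h1
    -- rightmost qualifier is at column ≥ r0.length - 1
    have hja' : r0.length - 1 ≤ a'.length := by
      by_contra h'
      push_neg at h'
      set jq := r0.length - 1 with hjq
      obtain ⟨y, hy⟩ : ∃ y, r1[jq]? = some y := by
        have : jq < r1.length := by omega
        exact ⟨r1[jq], List.getElem?_eq_getElem this⟩
      have hyq : maxC y < m := hqual jq (by omega) y hy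
      have hymem : y ∈ b' := by
        rw [he, List.getElem?_append_right (by omega)] at hy
        have hjq2 : jq - a'.length = (jq - a'.length - 1) + 1 := by omega
        rw [hjq2] at hy
        simp only [List.getElem?_cons_succ] at hy
        exact mem_of_get? hy
      exact hbq y hymem hyq
    have hphiB : phiB m r0 r1 rest' = r0.dropLast :: (a' ++ D :: b') :: rest' := by
      rw [phiB, if_neg hshort, hins]
    rw [hphiB]
    have hcol0d : ColR r0.dropLast (a' ++ D :: b') := by
      constructor
      · rw [hlenR1, List.length_dropLast]
        omega
      · intro j cu cl hcu hcl
        rw [getElem?_dropLast'] at hcu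
        split at hcu <;> rename_i hjlt
        · have hcl' : r1[j]? = some cl := by
            rw [he]
            rw [mid_get a' b' D d j] at hcl
            split at hcl <;> rename_i hj'
            · omega
            · exact hcl
          exact hcol01.2 j cu cl hcu hcl'
        · simp at hcu
    refine ⟨?_, ?_, ?_, ?_⟩
    · rw [SVTRows_def]
      constructor
      · intro r hr
        rcases List.mem_cons.1 hr with rfl | hr
        · refine ⟨hdl0ne, ?_, ?_⟩
          · exact fun x hx => hr0.2.1 x ((List.dropLast_sublist r0).mem hx)
          · have h1 : List.IsChain le2 (r0.dropLast ++ [r0.getLast hr0.1]) := by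
              rw [List.dropLast_append_getLast]
              exact hr0.2.2
            exact (List.isChain_append.1 h1).1
        rcases List.mem_cons.1 hr with rfl | hr
        · exact hrowR1
        · exact hrows r (by simp [hr])
      · rw [List.isChain_cons_cons, List.isChain_cons]
        exact ⟨hcol0d, hcolR1low, ((List.isChain_cons_cons.1 hcol).2).tail⟩
    · rw [svtWordRows_cons, svtWordRows_cons, hword1, svtRowWord_allSing hsingdl]
      conv_rhs => rw [svtWordRows_cons, svtWordRows_cons, svtRowWord_allSing hsing,
        ← hlast_eq, List.map_append]
      simp
    · simp [numCells, he]
      have : r0.length = r0.dropLast.length + 1 := by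
        rw [List.length_dropLast]; omega
      omega
    · show phi _ = _
      have hs0' : splitRM r0.dropLast = none := splitRM_eq_none hsingdl
      simp only [phi, hs0', hsplitR1]
      have hcond' : ((r0.dropLast).getLastD []).headI ≤ maxC D := by
        rw [hDmax]
        have hmem : (r0.dropLast.getLastD []).headI ∈ r0.map List.headI := by
          apply List.mem_map_of_mem
          apply (List.dropLast_sublist r0).mem
          rw [List.getLastD_eq_getLast?, List.getLast?_eq_getLast hdl0ne]
          exact List.getLast_mem hdl0ne
        have hpair : (r0.map List.headI).Pairwise (· ≤ ·) :=
          List.isChain_iff_pairwise.1 (chain_headI hr0.2.2 hcellne0)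
        have := pairwise_le_getLastD hpair hmem
        rwa [getLastD_map_headI hr0.1] at this
      rw [if_pos hcond', hDmax, hDdrop, ← he, hlast_eq]

end Aux5


section Aux6
open List

/-- master lemma: on a valid SVT whose word is not sorted, `phi` is a sign-reversing,
word-preserving involution. -/
lemma phi_good {rows : List (List Cell)} (h : SVTRows rows)
    (hw : ¬ List.IsChain (· ≤ ·) (svtWordRows rows)) :
    SVTRows (phi rows) ∧
    svtWordRows (phi rows) = svtWordRows rows ∧
    (numCells (phi rows) = numCells rows + 1 ∨ numCells rows = numCells (phi rows) + 1) ∧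
    phi (phi rows) = rows := by
  rcases rows with _ | ⟨r0, rest⟩
  · exact absurd (by simp [svtWordRows] : List.IsChain (· ≤ ·) (svtWordRows [])) hw
  have hr0 : RowOK r0 := (SVTRows_def _ |>.1 h).1 r0 (by simp)
  rcases hsp0 : splitRM r0 with _ | ⟨a, c, b⟩
  swap
  · obtain ⟨h1, h2, h3, h4⟩ := caseA0 hsp0 h
    exact ⟨h1, h2, Or.inl h3, h4⟩
  have hsing : AllSing r0 := allSing_of_splitRM_none hsp0
  have hcellne0 : ∀ x ∈ r0, x ≠ ([] : Cell) := fun x hx => (hr0.2.1 x hx).1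
  rcases rest with _ | ⟨r1, rest'⟩
  · refine absurd ?_ hw
    rw [svtWordRows_cons, svtWordRows_nil, List.append_nil, svtRowWord_allSing hsing]
    exact chain_headI hr0.2.2 hcellne0
  have hr1 : RowOK r1 := (SVTRows_def _ |>.1 h).1 r1 (by simp)
  set m := (r0.getLastD []).headI with hm
  rcases hsp1 : splitRM r1 with _ | ⟨a, c, b⟩
  · have hmq : ∀ x ∈ r1, 1 < x.length → maxC x < m := by
      intro x hx hlen
      have := allSing_of_splitRM_none hsp1 x hx
      omega
    obtain ⟨h1, h2, h3, h4⟩ := caseB hsp0 hmq h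
    have hphiB : phi (r0 :: r1 :: rest') = phiB m r0 r1 rest' := by
      simp only [phi, hsp0, hsp1]
      rfl
    rw [hphiB]
    exact ⟨h1, h2, Or.inr h3, h4⟩
  · obtain ⟨he, hc, hb⟩ := splitRM_some hsp1
    by_cases hcond : m ≤ maxC c
    · obtain ⟨h1, h2, h3, h4⟩ := caseA1 hsp0 hsp1 hcond h
      exact ⟨h1, h2, Or.inl h3, h4⟩
    · have hmq : ∀ x ∈ r1, 1 < x.length → maxC x < m := by
        intro x hx hlen
        have hxne : x ≠ ([] : Cell) := (hr1.2.1 x hx).1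
        rw [he] at hx
        rcases List.mem_append.1 hx with hx | hx
        · have hle2 : le2 x c := by
            apply chain_le2_left (by rw [← he]; exact hr1.2.2) _ x hx
            intro t ht
            exact (hr1.2.1 t (by rw [he]; simp [ht])).1
          have h1 : maxC x ≤ c.headI :=
            hle2 _ (maxC_mem hxne) _
              (headI_mem (hr1.2.1 c (by rw [he]; simp)).1)
          have h2 : c.headI < maxC c :=
            headI_lt_maxC (hr1.2.1 c (by rw [he]; simp)).2.1 hc
          omega
        rcases List.mem_cons.1 hx with rfl | hx
        · omega
        · have := hb x hx; omega
      obtain ⟨h1, h2, h3, h4⟩ := caseB hsp0 hmq h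
      have hphiB : phi (r0 :: r1 :: rest') = phiB m r0 r1 rest' := by
        simp only [phi, hsp0, hsp1]
        rw [if_neg hcond]
      rw [hphiB]
      exact ⟨h1, h2, Or.inr h3, h4⟩

/-! ### counting lemmas -/

lemma sum_tail_lengths {r : List Cell} (h : ∀ c ∈ r, c ≠ ([] : Cell)) :
    ((r.map (fun c => c.tail.length)).sum + r.length = (r.map List.length).sum) := by
  induction r with
  | nil => simp
  | cons c r ih =>
    have hc : c ≠ [] := h c (by simp)
    have h1 : c.tail.length + 1 = c.length := by
      have := c.length_tail
      have : 0 < c.length := List.length_pos_iff.2 hc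
      cases c
      · simp at hc
      · simp
    simp only [List.map_cons, List.sum_cons, List.length_cons]
    have := ih (fun x hx => h x (List.mem_cons_of_mem _ hx))
    omega

lemma svtRowWord_length {r : List Cell} (h : ∀ c ∈ r, c ≠ ([] : Cell)) :
    (svtRowWord r).length = (r.map List.length).sum := by
  rw [svtRowWord, List.length_append, List.length_flatten, List.length_map, List.map_map,
    List.map_reverse, List.sum_reverse]
  rw [← sum_tail_lengths h]
  congr 1
  · congr 1
    apply List.map_congr_left
    intro c _
    simp [Function.comp]

lemma numEntries_cons (r : List Cell) (rest : List (List Cell)) :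
    numEntries (r :: rest) = (r.map List.length).sum + numEntries rest := by
  simp [numEntries, svtEntries, List.length_flatten]

lemma numCells_cons (r : List Cell) (rest : List (List Cell)) :
    numCells (r :: rest) = r.length + numCells rest := by
  simp [numCells]

lemma svtWordRows_length {rows : List (List Cell)}
    (h : ∀ r ∈ rows, ∀ c ∈ r, c ≠ ([] : Cell)) :
    (svtWordRows rows).length = numEntries rows := by
  induction rows with
  | nil => rfl
  | cons r rest ih =>
    rw [svtWordRows_cons, List.length_append, svtRowWord_length (h r (by simp)),
      ih (fun t ht => h t (by simp [ht])), numEntries_cons]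

lemma numCells_le_numEntries {rows : List (List Cell)}
    (h : ∀ r ∈ rows, ∀ c ∈ r, c ≠ ([] : Cell)) :
    numCells rows ≤ numEntries rows := by
  induction rows with
  | nil => simp [numCells, numEntries, svtEntries]
  | cons r rest ih =>
    have h1 : r.length ≤ (r.map List.length).sum := by
      have hcells : ∀ c ∈ r, c ≠ ([] : Cell) := h r (by simp)
      clear h ih
      induction r with
      | nil => simp
      | cons c r ihr =>
        have hc : 0 < c.length := List.length_pos_iff.2 (hcells c (by simp))
        have := ihr (fun x hx => hcells x (by simp [hx]))
        simp only [List.map_cons, List.sum_cons, List.length_cons]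
        omega
    have h2 := ih (fun t ht => h t (by simp [ht]))
    rw [numCells_cons, numEntries_cons]
    omega

lemma word_infix {rows : List (List Cell)} {r : List Cell} (hr : r ∈ rows) :
    ∃ l1 l2, svtWordRows rows = l1 ++ (svtRowWord r ++ l2) := by
  induction rows with
  | nil => simp at hr
  | cons t rest ih =>
    rcases List.mem_cons.1 hr with rfl | hr2
    · exact ⟨[], svtWordRows rest, by rw [svtWordRows_cons]; simp⟩
    · obtain ⟨l1, l2, hl⟩ := ih hr2
      exact ⟨svtRowWord t ++ l1, l2, by rw [svtWordRows_cons, hl]; simp⟩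

lemma cells_ne_of_SVTRows {rows : List (List Cell)} (h : SVTRows rows) :
    ∀ r ∈ rows, ∀ c ∈ r, c ≠ ([] : Cell) :=
  fun r hr c hc => ((h.1 r hr).2.1 c hc).1

/-- the canonical single-row SVT with a given (sorted) word -/
def rowsOf (w : List ℕ) : List (List Cell) :=
  if w = [] then [] else [w.map (fun v => ([v] : Cell))]

lemma sorted_unique {rows : List (List Cell)} (h : SVTRows rows)
    (hw : List.IsChain (· ≤ ·) (svtWordRows rows)) :
    rows = rowsOf (svtWordRows rows) := by
  have hpair : (svtWordRows rows).Pairwise (· ≤ ·) := List.isChain_iff_pairwise.1 hw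
  rcases rows with _ | ⟨r0, rest⟩
  · rfl
  have hr0 : RowOK r0 := (SVTRows_def _ |>.1 h).1 r0 (by simp)
  have hcellne0 : ∀ x ∈ r0, x ≠ ([] : Cell) := fun x hx => (hr0.2.1 x hx).1
  -- no multicell in any row
  have hnomulti : ∀ r ∈ (r0 :: rest), AllSing r := by
    intro r hr
    by_contra h'
    have hsp : ∃ a c b, splitRM r = some (a, c, b) := by
      rcases hs : splitRM r with _ | ⟨a, c, b⟩
      · exact absurd (allSing_of_splitRM_none hs) h'
      · exact ⟨a, c, b, rfl⟩
    obtain ⟨a, c, b, hs⟩ := hsp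
    obtain ⟨he, hc, hb⟩ := splitRM_some hs
    have hrOK : RowOK r := (SVTRows_def _ |>.1 h).1 r hr
    have hcd : c.dropLast ≠ [] := by
      have := c.length_dropLast
      intro h''
      rw [h''] at this
      simp at this
      omega
    -- the row word starts with maxC c followed later by the smaller headI c.dropLast
    have hsplit : svtRowWord r = maxC c :: svtRowWord (a ++ c.dropLast :: b) :=
      he ▸ svtRowWord_split hb hc
    have hmem2 : c.dropLast.headI ∈ svtRowWord (a ++ c.dropLast :: b) := by
      rw [svtRowWord]
      apply List.mem_append_right
      apply List.mem_map_of_mem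
      simp
    have hsub : (svtRowWord r).Pairwise (· ≤ ·) := by
      obtain ⟨l1, l2, hw'⟩ := word_infix hr
      exact List.Pairwise.sublist
        ((List.sublist_append_left _ _).trans (List.sublist_append_right _ _))
        (hw' ▸ hpair)
    rw [hsplit] at hsub
    have hle : maxC c ≤ c.dropLast.headI := (List.pairwise_cons.1 hsub).1 _ hmem2
    have hlt : c.dropLast.headI < maxC c :=
      mem_dropLast_lt_maxC (hrOK.2.1 c (by rw [he]; simp)).2.1 (headI_mem hcd)
    omega
  -- rest must be empty
  rcases rest with _ | ⟨r1, rest'⟩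
  · -- rows = [r0]
    have hw0 : svtWordRows [r0] = r0.map List.headI := by
      rw [svtWordRows_cons, svtWordRows_nil, List.append_nil,
        svtRowWord_allSing (hnomulti r0 (by simp))]
    rw [hw0, rowsOf, if_neg (by simp [hr0.1]), List.map_map]
    congr 1
    conv_lhs => rw [← List.map_id r0]
    apply List.map_congr_left
    intro x hx
    exact cell_eq_singleton (hcellne0 x hx) (hnomulti r0 (by simp) x hx)
  · exfalso
    have hr1 : RowOK r1 := (SVTRows_def _ |>.1 h).1 r1 (by simp)
    have hcol01 : ColR r0 r1 := (List.isChain_cons_cons.1 (SVTRows_def _ |>.1 h).2).1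
    have hr0pos : 0 < r0.length := List.length_pos_iff.2 hr0.1
    have hr1pos : 0 < r1.length := List.length_pos_iff.2 hr1.1
    obtain ⟨x0, hx0⟩ : ∃ x0, r0[0]? = some x0 := ⟨r0[0], List.getElem?_eq_getElem hr0pos⟩
    obtain ⟨y0, hy0⟩ : ∃ y0, r1[0]? = some y0 := ⟨r1[0], List.getElem?_eq_getElem hr1pos⟩
    have hlt : lt2 y0 x0 := hcol01.2 0 x0 y0 hx0 hy0
    have h1 : y0.headI < x0.headI :=
      hlt _ (headI_mem ((hr1.2.1 y0 (mem_of_get? hy0)).1)) _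
        (headI_mem (hcellne0 x0 (mem_of_get? hx0)))
    -- but the word is sorted : head of r0 appears before head of r1
    have hx0mem : x0.headI ∈ svtRowWord r0 := by
      rw [svtRowWord_allSing (hnomulti r0 (by simp))]
      exact List.mem_map_of_mem (mem_of_get? hx0)
    have hy0mem : y0.headI ∈ svtRowWord r1 ++ svtWordRows rest' := by
      apply List.mem_append_left
      rw [svtRowWord_allSing (hnomulti r1 (by simp))]
      exact List.mem_map_of_mem (mem_of_get? hy0)
    have hword : svtWordRows (r0 :: r1 :: rest') =
        svtRowWord r0 ++ (svtRowWord r1 ++ svtWordRows rest') := by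
      rw [svtWordRows_cons, svtWordRows_cons]
    rw [hword] at hpair
    have := (List.pairwise_append.1 hpair).2.2 _ hx0mem _ hy0mem
    omega

end Aux6


section Aux7
open List

lemma rowInsert_max {x : ℕ} {r : List ℕ} (h : ∀ a ∈ r, a ≤ x) :
    rowInsert x r = (r ++ [x], none) := by
  induction r with
  | nil => rfl
  | cons a r ih =>
    rw [rowInsert, if_neg (not_lt.2 (h a (by simp)))]
    rw [ih (fun t ht => h t (by simp [ht]))]
    rfl

lemma RSK_sorted {w : List ℕ} (hw : List.IsChain (· ≤ ·) w) :
    RSK w = if w = [] then [] else [w] := by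
  induction w using List.reverseRecOn with
  | nil => rfl
  | append_singleton w x ih =>
    have hw' : List.IsChain (· ≤ ·) w := (List.isChain_append.1 hw).1
    have hall : ∀ a ∈ w, a ≤ x := by
      have hp := List.isChain_iff_pairwise.1 hw
      intro a ha
      exact (List.pairwise_append.1 hp).2.2 a ha x (by simp)
    have hRSK : RSK (w ++ [x]) = insert1 (RSK w) x := by
      rw [RSK, RSK, List.foldl_append]
      rfl
    rcases eq_or_ne w [] with rfl | hne
    · simp [hRSK, RSK, insert1]
    · rw [hRSK, ih hw', if_neg hne, if_neg (by simp)]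
      obtain ⟨y, t, rfl⟩ := List.exists_cons_of_ne_nil hne
      rw [insert1, rowInsert_max hall]

lemma svtWordRows_rowsOf (w : List ℕ) : svtWordRows (rowsOf w) = w := by
  rw [rowsOf]
  split <;> rename_i hw
  · rw [hw]; rfl
  · rw [svtWordRows_cons, svtWordRows_nil, List.append_nil,
      svtRowWord_allSing (by intro c hc; simp at hc; obtain ⟨v, _, rfl⟩ := hc; simp),
      List.map_map]
    conv_rhs => rw [← List.map_id w]
    apply List.map_congr_left
    intro x _
    rfl

lemma SVTRows_rowsOf {w : List ℕ} (hs : List.IsChain (· ≤ ·) w) (hpos : ∀ x ∈ w, 0 < x) :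
    SVTRows (rowsOf w) := by
  rw [rowsOf]
  split <;> rename_i hw
  · exact ⟨by simp, List.isChain_nil⟩
  · rw [SVTRows_def]
    constructor
    · intro r hr
      rw [List.mem_singleton] at hr
      subst hr
      refine ⟨by simpa using hw, ?_, ?_⟩
      · intro c hc
        simp only [List.mem_map] at hc
        obtain ⟨v, hv, rfl⟩ := hc
        exact ⟨by simp, by simp, by simpa using hpos v hv⟩
      · rw [List.isChain_map]
        apply List.IsChain.imp _ hs
        intro a b hab p hp q hq
        rw [List.mem_singleton] at hp hq
        subst hp; subst hq
        exact hab
    · simp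

lemma numCells_rowsOf (w : List ℕ) : numCells (rowsOf w) = w.length := by
  rw [rowsOf]
  split <;> rename_i hw
  · rw [hw]; rfl
  · simp [numCells]

lemma eps_rowsOf {w : List ℕ} (hs : List.IsChain (· ≤ ·) w) (hpos : ∀ x ∈ w, 0 < x) :
    eps (rowsOf w) = 0 := by
  have h1 : numEntries (rowsOf w) = w.length := by
    rw [← svtWordRows_length (cells_ne_of_SVTRows (SVTRows_rowsOf hs hpos)),
      svtWordRows_rowsOf]
  rw [eps, h1, numCells_rowsOf]
  omega

end Aux7

open Classical in
/-- If `f = Σ_{T ∈ 𝐓(α)} wt(T) s_{sh(T)}` with `𝐓(α)` nonempty, of fixed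
content, containing a unique single-row tableau `S₀`, and with the associated set `𝐒(α)` of
set-valued tableaux (those whose reading word RSK-inserts to an element of `𝐓(α)`) finite,
then `Σ_{S ∈ 𝐒(α)} (−1)^{ε(S)} wt(S) = wt(S₀)`. -/
theorem signed_sum_identity {R : Type*} [CommRing R]
    (TT : Finset SSYT) (wt : SSYT → R) (hne : TT.Nonempty) (mu : ℕ →₀ ℕ)
    (hcontent : ∀ T ∈ TT, mono T.1.flatten = mu)
    (S0 : SSYT) (hS0 : S0 ∈ TT) (hrow : S0.1.length ≤ 1)
    (huniq : ∀ T ∈ TT, T.1.length ≤ 1 → T = S0)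
    (hfin : {S : SVT | ∃ T ∈ TT, RSK (svtWordRows S.1) = T.1.reverse}.Finite) :
    (∑ S ∈ hfin.toFinset,
        (-1 : R) ^ eps S.1 *
          ∑ T ∈ TT, if RSK (svtWordRows S.1) = T.1.reverse then wt T else 0)
      = wt S0 := by
  classical
  set F := hfin.toFinset with hF
  set word : SVT → List ℕ := fun S => svtWordRows S.1 with hworddef
  have hmemF : ∀ S : SVT, S ∈ F ↔ ∃ T ∈ TT, RSK (svtWordRows S.1) = T.1.reverse := by
    intro S
    rw [hF, Set.Finite.mem_toFinset]
    rfl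
  -- basic facts about S0
  have hS0cases : S0.1 = [] ∨ ∃ r, S0.1 = [r] := by
    rcases hS : S0.1 with _ | ⟨r, t⟩
    · exact Or.inl rfl
    · rcases t with _ | ⟨r2, t2⟩
      · exact Or.inr ⟨r, rfl⟩
      · rw [hS] at hrow; simp at hrow
  set w0 : List ℕ := S0.1.flatten with hw0
  have hw0facts : List.IsChain (· ≤ ·) w0 ∧ (∀ x ∈ w0, 0 < x) ∧ RSK w0 = S0.1.reverse := by
    rcases hS0cases with hS | ⟨r, hS⟩
    · refine ⟨?_, ?_, ?_⟩ <;> rw [hw0, hS]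
      · exact List.isChain_nil
      · intro x hx; simp at hx
      · rfl
    · have hrfacts := S0.2.1 r (by rw [hS]; simp)
      have hww : w0 = r := by rw [hw0, hS]; simp
      refine ⟨by rw [hww]; exact hrfacts.2.2, by rw [hww]; exact hrfacts.2.1, ?_⟩
      rw [hww, RSK_sorted hrfacts.2.2, if_neg hrfacts.1, hS]
      rfl
  obtain ⟨hw0s, hw0pos, hw0RSK⟩ := hw0facts
  set S0svt : SVT := ⟨rowsOf w0, SVTRows_rowsOf hw0s hw0pos⟩ with hS0svt
  have hwordS0 : word S0svt = w0 := svtWordRows_rowsOf w0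
  have hS0svtF : S0svt ∈ F := by
    rw [hmemF]
    refine ⟨S0, hS0, ?_⟩
    rw [show svtWordRows S0svt.1 = w0 from svtWordRows_rowsOf w0, hw0RSK]
  have hw0mem : w0 ∈ F.image word := Finset.mem_image.2 ⟨S0svt, hS0svtF, hwordS0⟩
  -- fiber the sum over reading words
  have hstep : (∑ w ∈ F.image word, ∑ S ∈ F.filter (fun S => word S = w),
      ((-1 : R) ^ eps S.1 *
        ∑ T ∈ TT, if RSK (svtWordRows S.1) = T.1.reverse then wt T else 0))
      = ∑ S ∈ F, ((-1 : R) ^ eps S.1 *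
        ∑ T ∈ TT, if RSK (svtWordRows S.1) = T.1.reverse then wt T else 0) := by
    rw [Finset.sum_fiberwise_eq_sum_filter,
      Finset.filter_true_of_mem (fun S hS => Finset.mem_image_of_mem _ hS)]
  rw [← hstep]
  -- the only contributing word is w0
  rw [Finset.sum_eq_single_of_mem w0 hw0mem]
  · -- the fiber of w0 is the canonical single-row tableau
    have hfil : F.filter (fun S => word S = w0) = {S0svt} := by
      ext S
      simp only [Finset.mem_filter, Finset.mem_singleton]
      constructor
      · rintro ⟨hSF, hword⟩
        apply Subtype.ext
        have huniq := sorted_unique S.2 (by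
          rw [show svtWordRows S.1 = word S from rfl, hword]; exact hw0s)
        rw [show svtWordRows S.1 = word S from rfl, hword] at huniq
        exact huniq
      · rintro rfl
        exact ⟨hS0svtF, hwordS0⟩
    rw [hfil, Finset.sum_singleton]
    have heps0 : eps S0svt.1 = 0 := eps_rowsOf hw0s hw0pos
    rw [heps0, pow_zero, one_mul]
    have hsum : (∑ T ∈ TT, if RSK (svtWordRows S0svt.1) = T.1.reverse then wt T else 0)
        = ∑ T ∈ TT, if T = S0 then wt T else 0 := by
      apply Finset.sum_congr rfl
      intro T hT
      have hcond : (RSK (svtWordRows S0svt.1) = T.1.reverse) ↔ (T = S0) := by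
        rw [show svtWordRows S0svt.1 = w0 from svtWordRows_rowsOf w0, hw0RSK]
        constructor
        · intro hrev
          exact Subtype.ext (List.reverse_injective hrev.symm)
        · rintro rfl
          rfl
      by_cases hTS : T = S0
      · rw [if_pos (hcond.2 hTS), if_pos hTS]
      · rw [if_neg (fun h' => hTS (hcond.1 h')), if_neg hTS]
    rw [hsum, Finset.sum_ite_eq' TT S0 wt, if_pos hS0]
  · -- all other fibers vanish
    intro w hwim hwne
    -- the inner ite-sum only depends on the word
    have hconst : ∀ S ∈ F.filter (fun S => word S = w),
        ((-1 : R) ^ eps S.1 * ∑ T ∈ TT, if RSK (svtWordRows S.1) = T.1.reverse then wt T else 0)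
        = (-1 : R) ^ eps S.1 * ∑ T ∈ TT, if RSK w = T.1.reverse then wt T else 0 := by
      intro S hS
      rw [show svtWordRows S.1 = word S from rfl, (Finset.mem_filter.1 hS).2]
    rw [Finset.sum_congr rfl hconst, ← Finset.sum_mul]
    have hzero : (∑ S ∈ F.filter (fun S => word S = w), (-1 : R) ^ eps S.1) = 0 := by
      -- w cannot be sorted
      have hnotsorted : ¬ List.IsChain (· ≤ ·) w := by
        intro hsorted
        obtain ⟨S, hSF, hSw⟩ := Finset.mem_image.1 hwim
        obtain ⟨T, hTT, hTR⟩ := (hmemF S).1 hSF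
        rw [show svtWordRows S.1 = word S from rfl, hSw, RSK_sorted hsorted] at hTR
        split at hTR <;> rename_i hwnil
        · have hT1 : T.1 = [] := by
            have := congrArg List.reverse hTR
            simpa using this.symm
          have hTS0 : T = S0 := huniq T hTT (by rw [hT1]; simp)
          apply hwne
          rw [hwnil, hw0, ← hTS0, hT1]
          rfl
        · have hT1 : T.1 = [w] := by
            have := congrArg List.reverse hTR
            simpa using this.symm
          have hTS0 : T = S0 := huniq T hTT (by rw [hT1]; simp)
          apply hwne
          rw [hw0, ← hTS0, hT1]
          simp
      -- sign-reversing involution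
      have key : ∀ S : SVT, S ∈ F.filter (fun S => word S = w) →
          SVTRows (phi S.1) ∧ svtWordRows (phi S.1) = svtWordRows S.1 ∧
          (numCells (phi S.1) = numCells S.1 + 1 ∨
            numCells S.1 = numCells (phi S.1) + 1) ∧
          phi (phi S.1) = S.1 := by
        intro S hS
        apply phi_good S.2
        rw [show svtWordRows S.1 = word S from rfl, (Finset.mem_filter.1 hS).2]
        exact hnotsorted
      refine Finset.sum_involution (fun S hS => ⟨phi S.1, (key S hS).1⟩) ?_ ?_ ?_ ?_
      · intro S hS
        obtain ⟨h1, h2, h3, h4⟩ := key S hS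
        have hE : numEntries (phi S.1) = numEntries S.1 := by
          rw [← svtWordRows_length (cells_ne_of_SVTRows h1),
            ← svtWordRows_length (cells_ne_of_SVTRows S.2), h2]
        have hCE : numCells S.1 ≤ numEntries S.1 :=
          numCells_le_numEntries (cells_ne_of_SVTRows S.2)
        have hCE' : numCells (phi S.1) ≤ numEntries (phi S.1) :=
          numCells_le_numEntries (cells_ne_of_SVTRows h1)
        show (-1 : R) ^ eps S.1 + (-1 : R) ^ eps (phi S.1) = 0
        rcases h3 with h3 | h3
        · have heq : eps S.1 = eps (phi S.1) + 1 := by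
            rw [eps, eps, hE]
            omega
          rw [heq, pow_succ]
          ring
        · have heq : eps (phi S.1) = eps S.1 + 1 := by
            rw [eps, eps, hE]
            omega
          rw [heq, pow_succ]
          ring
      · intro S hS _
        obtain ⟨h1, h2, h3, h4⟩ := key S hS
        intro heq
        have hval : phi S.1 = S.1 := congrArg Subtype.val heq
        rw [hval] at h3
        omega
      · intro S hS
        obtain ⟨h1, h2, h3, h4⟩ := key S hS
        apply Finset.mem_filter.2
        constructor
        · apply (hmemF _).2
          obtain ⟨T, hTT, hTR⟩ := (hmemF S).1 (Finset.mem_filter.1 hS).1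
          exact ⟨T, hTT, by
            rw [show svtWordRows (⟨phi S.1, h1⟩ : SVT).1 = svtWordRows S.1 from h2]
            exact hTR⟩
        · show svtWordRows (phi S.1) = w
          rw [h2]
          exact (Finset.mem_filter.1 hS).2
      · intro S hS
        exact Subtype.ext (key S hS).2.2.2
    rw [hzero, zero_mul]

end KG
end
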